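/- arXiv:2406.19516 — 6 statements merged into one kernel-verified Lean document; each statement's English description precedes it below -/
import Mathlib

section
/- Let S be a finite set of size s, let A ∈ S^{N×k} be an N×k array with entries in S, and let t ≤ k be a positive integer. Then Unb_{2,t}(A) = Σ_{1 ≤ r, r̃ ≤ N} C(H(A;r,r̃), t) − C(k,t) · N²/s^t, where the sum ranges over all ordered pairs (r,r̃) of row indices (including r = r̃), H(A;r,r̃) := #{j ∈ {1,...,k} : A_{r,j} = A_{r̃,j}} is the Hamming similarity between the r-th and r̃-th runs, and C(·,·) denotes the binomial coefficient. -/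
open Finset

noncomputable section

instance {t k : ℕ} : DecidablePred (StrictMono : (Fin t → Fin k) → Prop) := fun f =>
  decidable_of_iff (∀ a b : Fin t, a < b → f a < f b) Iff.rfl

/-- The number of rows of the array `A` whose restriction to the columns
`j 0, …, j (t-1)` equals the tuple `x`. -/
def rowCount {S : Type*} [DecidableEq S] {N k t : ℕ} (A : Fin N → Fin k → S)
    (x : Fin t → S) (j : Fin t → Fin k) : ℕ :=
  (Finset.univ.filter fun i : Fin N => ∀ r, A i (j r) = x r).card

/-- `A` is an orthogonal array with `s` levels and strength `t`. -/
def IsOA {S : Type*} [DecidableEq S] (s t : ℕ) {N k : ℕ} (A : Fin N → Fin k → S) : Prop :=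
  ∀ (x : Fin t → S) (j : Fin t → Fin k), StrictMono j →
    (rowCount A x j : ℝ) = (N : ℝ) / (s : ℝ) ^ t

/-- The `p`-unbalance of strength `t` of `A` (with `s` levels). -/
def Unb {S : Type*} [Fintype S] [DecidableEq S] (s : ℕ) (p : ℝ) (t : ℕ) {N k : ℕ}
    (A : Fin N → Fin k → S) : ℝ :=
  ∑ x : Fin t → S, ∑ j ∈ Finset.univ.filter (fun j : Fin t → Fin k => StrictMono j),
    |(rowCount A x j : ℝ) - (N : ℝ) / (s : ℝ) ^ t| ^ p

/-- The tolerance of strength `t` of `A` (with `s` levels). -/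
def Tol {S : Type*} [DecidableEq S] (s t : ℕ) {N k : ℕ} (A : Fin N → Fin k → S) : ℝ :=
  ⨆ (x : Fin t → S) (j : {j : Fin t → Fin k // StrictMono j}),
    |(rowCount A x j.1 : ℝ) - (N : ℝ) / (s : ℝ) ^ t|

/-- The Hamming similarity between the rows `r` and `r'` of `A`. -/
def Ham {S : Type*} [DecidableEq S] {N k : ℕ} (A : Fin N → Fin k → S) (r r' : Fin N) : ℕ :=
  (Finset.univ.filter fun j : Fin k => A r j = A r' j).card

/-- The matrix `X(A,f)`. -/
def Xmat {S : Type*} {N k : ℕ} (f : S → ℝ) (A : Fin N → Fin k → S) :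
    Matrix (Fin N) (Fin k) ℝ :=
  Matrix.of fun i j => f (A i j) / Real.sqrt (∑ i' : Fin N, f (A i' j) ^ 2)

/-- The absolute deviation of `f` with respect to the uniform measure. -/
def sigma1 {S : Type*} [Fintype S] (s : ℕ) (f : S → ℝ) : ℝ :=
  ⨅ α : ℝ, (∑ x : S, |f x - α|) / s

/-- The typical deviation of `f` with respect to the uniform measure. -/
def sigma2 {S : Type*} [Fintype S] (s : ℕ) (f : S → ℝ) : ℝ :=
  ⨅ α : ℝ, Real.sqrt ((∑ x : S, |f x - α| ^ 2) / s)
end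


section Aux

open Finset

lemma count_strictMono_into {k t : ℕ} (T : Finset (Fin k)) :
    ((Finset.univ : Finset (Fin t → Fin k)).filter
      (fun j => StrictMono j ∧ ∀ r, j r ∈ T)).card = T.card.choose t := by
  classical
  rw [← Finset.card_powersetCard t T]
  refine Finset.card_bij' (fun j _ => Finset.image j Finset.univ)
    (fun u hu i => u.orderEmbOfFin (Finset.mem_powersetCard.mp hu).2 i) ?_ ?_ ?_ ?_
  · intro j hj
    simp only [Finset.mem_filter, Finset.mem_univ, true_and] at hj
    rw [Finset.mem_powersetCard]
    constructor
    · intro a ha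
      simp only [Finset.mem_image] at ha
      obtain ⟨i, _, rfl⟩ := ha
      exact hj.2 i
    · rw [Finset.card_image_of_injective _ hj.1.injective, Finset.card_univ, Fintype.card_fin]
  · intro u hu
    simp only [Finset.mem_filter, Finset.mem_univ, true_and]
    exact ⟨(u.orderEmbOfFin (Finset.mem_powersetCard.mp hu).2).strictMono, fun r =>
      (Finset.mem_powersetCard.mp hu).1 (u.orderEmbOfFin_mem _ r)⟩
  · intro j hj
    simp only [Finset.mem_filter, Finset.mem_univ, true_and] at hj
    funext i
    have := Finset.orderEmbOfFin_unique
      (s := Finset.image j Finset.univ)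
      (h := by rw [Finset.card_image_of_injective _ hj.1.injective, Finset.card_univ,
        Fintype.card_fin])
      (f := j) (fun x => Finset.mem_image_of_mem _ (Finset.mem_univ x)) hj.1
    exact (congrFun this i).symm
  · intro u hu
    have h := (Finset.mem_powersetCard.mp hu).2
    ext a
    simp only [Finset.mem_image, Finset.mem_univ, true_and]
    constructor
    · rintro ⟨i, rfl⟩
      exact u.orderEmbOfFin_mem h i
    · intro ha
      have : a ∈ Set.range (u.orderEmbOfFin h) := by
        rw [Finset.range_orderEmbOfFin]; exact ha
      obtain ⟨i, hi⟩ := this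
      exact ⟨i, hi⟩

lemma count_strictMono {k t : ℕ} :
    ((Finset.univ : Finset (Fin t → Fin k)).filter (fun j => StrictMono j)).card
      = k.choose t := by
  classical
  have := count_strictMono_into (k := k) (t := t) Finset.univ
  rw [Finset.card_univ, Fintype.card_fin] at this
  rw [← this]
  congr 1
  apply Finset.filter_congr
  intro j _
  simp

lemma sum_rowCount {S : Type*} [Fintype S] [DecidableEq S] {N k t : ℕ}
    (A : Fin N → Fin k → S) (j : Fin t → Fin k) :
    ∑ x : Fin t → S, rowCount A x j = N := by
  classical
  have h := Finset.card_eq_sum_card_fiberwise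
    (f := fun i : Fin N => fun r : Fin t => A i (j r))
    (s := Finset.univ) (t := Finset.univ) (fun _ _ => Finset.mem_univ _)
  rw [Finset.card_univ, Fintype.card_fin] at h
  refine Eq.trans (Finset.sum_congr rfl ?_) h.symm
  intro x _
  unfold rowCount
  congr 1
  apply Finset.filter_congr
  intro i _
  simp [funext_iff]

lemma sum_indicator_pair {S : Type*} [Fintype S] [DecidableEq S] {N k t : ℕ}
    (A : Fin N → Fin k → S) (j : Fin t → Fin k) (r r' : Fin N) :
    ∑ x : Fin t → S,
      (if ((∀ i, A r (j i) = x i) ∧ (∀ i, A r' (j i) = x i)) then (1 : ℝ) else 0)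
      = if (∀ i, A r (j i) = A r' (j i)) then 1 else 0 := by
  classical
  by_cases h : ∀ i, A r (j i) = A r' (j i)
  · rw [if_pos h]
    have hcond : ∀ x : Fin t → S,
        ((∀ i, A r (j i) = x i) ∧ (∀ i, A r' (j i) = x i)) ↔ x = fun i => A r (j i) := by
      intro x
      constructor
      · rintro ⟨h1, _⟩; funext i; exact (h1 i).symm
      · rintro rfl; exact ⟨fun i => rfl, fun i => (h i).symm⟩
    simp only [hcond]
    rw [Finset.sum_ite_eq' Finset.univ]
    simp
  · rw [if_neg h]
    apply Finset.sum_eq_zero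
    intro x _
    rw [if_neg]
    rintro ⟨h1, h2⟩
    exact h fun i => (h1 i).trans (h2 i).symm

end Aux

/-- The `2`-unbalance of strength `t` equals
`Σ_{r,r̃} C(H(A;r,r̃),t) − C(k,t)·N²/s^t`, where `H` is the Hamming similarity. -/
theorem statement2 {S : Type*} [Fintype S] [DecidableEq S] {s N k t : ℕ}
    (hcard : Fintype.card S = s) (ht : 0 < t) (htk : t ≤ k)
    (A : Fin N → Fin k → S) :
    Unb s 2 t A =
      (∑ r : Fin N, ∑ r' : Fin N, ((Ham A r r').choose t : ℝ)) -
        (k.choose t : ℝ) * (N : ℝ) ^ 2 / (s : ℝ) ^ t := by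
  classical
  set J : Finset (Fin t → Fin k) := Finset.univ.filter (fun j => StrictMono j) with hJ
  set c : ℝ := (N : ℝ) / (s : ℝ) ^ t with hc
  have hJcard : J.card = k.choose t := count_strictMono
  have hcardX : (Fintype.card (Fin t → S) : ℝ) = (s : ℝ) ^ t := by
    rw [Fintype.card_fun, Fintype.card_fin, hcard]
    push_cast; ring
  have hUnb : Unb s 2 t A = ∑ j ∈ J, ∑ x : Fin t → S, ((rowCount A x j : ℝ) - c) ^ 2 := by
    rw [Unb, Finset.sum_comm]
    refine Finset.sum_congr rfl fun j _ => Finset.sum_congr rfl fun x _ => ?_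
    rw [show (2 : ℝ) = ((2 : ℕ) : ℝ) by norm_num, Real.rpow_natCast, sq_abs]
  have hsum1 : ∀ j : Fin t → Fin k, ∑ x : Fin t → S, (rowCount A x j : ℝ) = N := by
    intro j
    exact_mod_cast congrArg (Nat.cast : ℕ → ℝ) (sum_rowCount A j)
  have hsq : ∀ j : Fin t → Fin k, ∑ x : Fin t → S, (rowCount A x j : ℝ) ^ 2
      = ∑ r : Fin N, ∑ r' : Fin N,
        (if (∀ i, A r (j i) = A r' (j i)) then (1 : ℝ) else 0) := by
    intro j
    have hrc : ∀ x : Fin t → S, (rowCount A x j : ℝ)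
        = ∑ r : Fin N, (if (∀ i, A r (j i) = x i) then (1 : ℝ) else 0) := by
      intro x
      rw [Finset.sum_boole, rowCount]
    calc ∑ x : Fin t → S, (rowCount A x j : ℝ) ^ 2
        = ∑ x : Fin t → S, ∑ r : Fin N, ∑ r' : Fin N,
            ((if (∀ i, A r (j i) = x i) then (1 : ℝ) else 0) *
             (if (∀ i, A r' (j i) = x i) then (1 : ℝ) else 0)) := by
          refine Finset.sum_congr rfl fun x _ => ?_
          rw [sq, hrc x, Finset.sum_mul_sum]
      _ = ∑ r : Fin N, ∑ r' : Fin N, ∑ x : Fin t → S,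
            ((if (∀ i, A r (j i) = x i) then (1 : ℝ) else 0) *
             (if (∀ i, A r' (j i) = x i) then (1 : ℝ) else 0)) := by
          rw [Finset.sum_comm]
          exact Finset.sum_congr rfl fun r _ => Finset.sum_comm
      _ = ∑ r : Fin N, ∑ r' : Fin N,
            (if (∀ i, A r (j i) = A r' (j i)) then (1 : ℝ) else 0) := by
          refine Finset.sum_congr rfl fun r _ => Finset.sum_congr rfl fun r' _ => ?_
          rw [← sum_indicator_pair A j r r']
          refine Finset.sum_congr rfl fun x _ => ?_
          by_cases h1 : ∀ i, A r (j i) = x i <;> by_cases h2 : ∀ i, A r' (j i) = x i <;>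
            simp [h1, h2]
  have hcount : ∀ r r' : Fin N,
      ∑ j ∈ J, (if (∀ i, A r (j i) = A r' (j i)) then (1 : ℝ) else 0)
        = ((Ham A r r').choose t : ℝ) := by
    intro r r'
    rw [Finset.sum_boole, hJ, Finset.filter_filter]
    have : (Finset.univ.filter fun j : Fin t → Fin k =>
        StrictMono j ∧ ∀ i, A r (j i) = A r' (j i))
        = Finset.univ.filter fun j : Fin t → Fin k =>
          StrictMono j ∧ ∀ i, j i ∈ Finset.univ.filter fun col : Fin k => A r col = A r' col := by
      apply Finset.filter_congr
      intro jj _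
      simp
    rw [this, count_strictMono_into, Ham]
  have expand : ∀ j ∈ J, ∑ x : Fin t → S, ((rowCount A x j : ℝ) - c) ^ 2
      = (∑ r : Fin N, ∑ r' : Fin N,
          (if (∀ i, A r (j i) = A r' (j i)) then (1 : ℝ) else 0))
        - 2 * c * N + (s : ℝ) ^ t * c ^ 2 := by
    intro j _
    have h1 : ∀ x : Fin t → S, ((rowCount A x j : ℝ) - c) ^ 2
        = (rowCount A x j : ℝ) ^ 2 - 2 * c * (rowCount A x j : ℝ) + c ^ 2 := fun x => by ring
    rw [Finset.sum_congr rfl fun x _ => h1 x, Finset.sum_add_distrib, Finset.sum_sub_distrib,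
      ← Finset.mul_sum, hsum1 j, hsq j, Finset.sum_const, Finset.card_univ, nsmul_eq_mul, hcardX]
  rw [hUnb, Finset.sum_congr rfl expand, Finset.sum_add_distrib, Finset.sum_sub_distrib,
    Finset.sum_const, Finset.sum_const, hJcard, nsmul_eq_mul, nsmul_eq_mul]
  have hswap : ∑ j ∈ J, ∑ r : Fin N, ∑ r' : Fin N,
      (if (∀ i, A r (j i) = A r' (j i)) then (1 : ℝ) else 0)
      = ∑ r : Fin N, ∑ r' : Fin N, ((Ham A r r').choose t : ℝ) := by
    rw [Finset.sum_comm]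
    refine Finset.sum_congr rfl fun r _ => ?_
    rw [Finset.sum_comm]
    exact Finset.sum_congr rfl fun r' _ => hcount r r'
  rw [hswap]
  rcases eq_or_ne ((s : ℝ) ^ t) 0 with hs | hs
  · rw [hc, hs]
    simp
  · rw [hc]
    field_simp
    ring
end

section
/- Let S be a finite set of size s, let f : S → ℝ be a non-constant function with Σ_{x∈S} f(x) = 0, and let A ∈ S^{N×k} be an N×k array with entries in S that is an OA(N,k,s,1), with N = λs². Define X(A,f) by X_{i,j} := f(A_{i,j}) / sqrt(Σ_{i'=1}^{N} f(A_{i',j})²). Then ‖X(A,f)^T X(A,f) − I‖_F ≤ sqrt(2·Unb_{2,2}(A)) / (λs), where ‖·‖_F is the Frobenius norm and I is the k×k identity matrix. -/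
open Finset Matrix

-- auxiliary lemmas
lemma strictMono_fin_two_iff {α : Type*} [Preorder α] (g : Fin 2 → α) :
    StrictMono g ↔ g 0 < g 1 := by
  constructor
  · exact fun h => h (by norm_num)
  · intro h a b hab
    fin_cases a <;> fin_cases b <;> simp_all

lemma sum_symm_eq_two_mul {k : ℕ} (g : Fin k → Fin k → ℝ)
    (hdiag : ∀ j, g j j = 0) (hsymm : ∀ j j', g j j' = g j' j) :
    ∑ j : Fin k, ∑ j' : Fin k, g j j'
      = 2 * ∑ p ∈ Finset.univ.filter (fun p : Fin k × Fin k => p.1 < p.2), g p.1 p.2 := by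
  classical
  rw [← Finset.sum_product' Finset.univ Finset.univ (fun a b => g a b)]
  rw [show (Finset.univ ×ˢ Finset.univ : Finset (Fin k × Fin k)) = Finset.univ from
    Finset.univ_product_univ]
  rw [← Finset.sum_filter_add_sum_filter_not Finset.univ (fun p : Fin k × Fin k => p.1 < p.2)
    (fun p => g p.1 p.2)]
  rw [← Finset.sum_filter_add_sum_filter_not
    (Finset.univ.filter (fun p : Fin k × Fin k => ¬ p.1 < p.2))
    (fun p : Fin k × Fin k => p.2 < p.1) (fun p => g p.1 p.2)]
  have h0 : ∑ p ∈ (Finset.univ.filter (fun p : Fin k × Fin k => ¬ p.1 < p.2)).filter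
      (fun p : Fin k × Fin k => ¬ p.2 < p.1), g p.1 p.2 = 0 := by
    refine Finset.sum_eq_zero fun p hp => ?_
    simp only [Finset.mem_filter] at hp
    have : p.1 = p.2 := le_antisymm (not_lt.mp hp.2) (not_lt.mp hp.1.2)
    rw [this, hdiag]
  have h1 : ∑ p ∈ (Finset.univ.filter (fun p : Fin k × Fin k => ¬ p.1 < p.2)).filter
      (fun p : Fin k × Fin k => p.2 < p.1), g p.1 p.2
      = ∑ p ∈ Finset.univ.filter (fun p : Fin k × Fin k => p.1 < p.2), g p.1 p.2 := by
    refine Finset.sum_nbij' Prod.swap Prod.swap ?_ ?_ ?_ ?_ ?_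
    · intro p hp
      simp only [Finset.mem_filter] at hp ⊢
      exact ⟨Finset.mem_univ _, hp.2⟩
    · intro p hp
      simp only [Finset.mem_filter] at hp ⊢
      exact ⟨⟨Finset.mem_univ _, asymm hp.2⟩, hp.2⟩
    · intro p _; simp
    · intro p _; simp
    · intro p _; exact hsymm p.1 p.2
  rw [h0, h1]; ring

/-- If `A` is an OA of strength `1` with `N = λs²`, then the Frobenius norm of
`X(A,f)ᵀX(A,f) − I` is at most `√(2·Unb_{2,2}(A))/(λs)`. -/
theorem statement7 {S : Type*} [Fintype S] [DecidableEq S] {s N k l : ℕ}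
    (hcard : Fintype.card S = s) (f : S → ℝ)
    (hf : ∃ x y : S, f x ≠ f y) (hsum : ∑ x : S, f x = 0)
    (hN : N = l * s ^ 2) (hl : 0 < l)
    (A : Fin N → Fin k → S) (hA : IsOA s 1 A) :
    Real.sqrt (∑ i : Fin k, ∑ j : Fin k, (((Xmat f A)ᵀ * Xmat f A - 1 : Matrix (Fin k) (Fin k) ℝ) i j) ^ 2)
      ≤ Real.sqrt (2 * Unb s 2 2 A) / ((l : ℝ) * (s : ℝ)) := by
  classical
  obtain ⟨x₀, y₀, hxy⟩ := hf
  haveI : Nonempty S := ⟨x₀⟩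
  have hs : 0 < s := hcard ▸ Fintype.card_pos
  have hs' : (0:ℝ) < s := by exact_mod_cast hs
  have hl' : (0:ℝ) < l := by exact_mod_cast hl
  have hNpos : 0 < N := by rw [hN]; positivity
  have hNs : (N:ℝ) = (l:ℝ) * (s:ℝ)^2 := by rw [hN]; push_cast; ring
  set Q : ℝ := ∑ x : S, f x ^ 2 with hQdef
  have hzex : ∃ z : S, f z ≠ 0 := by
    by_cases hx : f x₀ = 0
    · exact ⟨y₀, fun hy => hxy (by rw [hx, hy])⟩
    · exact ⟨x₀, hx⟩
  obtain ⟨z, hz⟩ := hzex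
  have hQ : 0 < Q :=
    Finset.sum_pos' (fun i _ => sq_nonneg _) ⟨z, Finset.mem_univ z, by positivity⟩
  -- strength-1 counts
  have count1 : ∀ (j : Fin k) (a : S),
      ((Finset.univ.filter fun i : Fin N => A i j = a).card : ℝ) = (N:ℝ) / s := by
    intro j a
    have hmono : StrictMono (fun _ : Fin 1 => j) :=
      fun a b h => absurd (Subsingleton.elim a b) h.ne
    have h := hA (fun _ => a) (fun _ => j) hmono
    rw [pow_one] at h
    rw [← h]
    have hfe : (Finset.univ.filter fun i : Fin N => A i j = a)
        = Finset.univ.filter fun i : Fin N => ∀ r : Fin 1, A i j = a := by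
      apply Finset.filter_congr; intro i _; simp
    rw [hfe]; rfl
  set c : ℝ := (N:ℝ) / s * Q with hcdef
  have hc : 0 < c := by positivity
  have colsq : ∀ j : Fin k, ∑ i : Fin N, f (A i j) ^ 2 = c := by
    intro j
    rw [← Finset.sum_fiberwise Finset.univ (fun i => A i j) (fun i => f (A i j) ^ 2)]
    rw [hcdef, hQdef, Finset.mul_sum]
    refine Finset.sum_congr rfl fun b _ => ?_
    have h1 : ∀ i ∈ Finset.univ.filter (fun i : Fin N => A i j = b),
        f (A i j) ^ 2 = f b ^ 2 := fun i hi => by rw [(Finset.mem_filter.mp hi).2]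
    rw [Finset.sum_congr rfl h1, Finset.sum_const, nsmul_eq_mul, count1]
  -- entries of XᵀX
  set T : Fin k → Fin k → ℝ := fun j j' => ∑ i : Fin N, f (A i j) * f (A i j') with hTdef
  have entry : ∀ j j', ((Xmat f A)ᵀ * Xmat f A) j j' = T j j' / c := by
    intro j j'
    rw [Matrix.mul_apply]
    simp only [hTdef]
    rw [Finset.sum_div]
    refine Finset.sum_congr rfl fun i _ => ?_
    simp only [Matrix.transpose_apply, Xmat, Matrix.of_apply]
    rw [colsq, colsq, div_mul_div_comm, Real.mul_self_sqrt hc.le]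
  have Tdiag : ∀ j, T j j = c := by
    intro j
    simp only [hTdef]
    simpa [sq] using colsq j
  have Tsymm : ∀ j j', T j j' = T j' j := by
    intro j j'; simp only [hTdef]
    exact Finset.sum_congr rfl fun i _ => mul_comm _ _
  set E : Fin k → Fin k → ℝ :=
    fun j j' => ((Xmat f A)ᵀ * Xmat f A - 1 : Matrix (Fin k) (Fin k) ℝ) j j' with hEdef
  have hEdiag : ∀ j, E j j = 0 := by
    intro j
    simp only [hEdef, Matrix.sub_apply, Matrix.one_apply_eq, entry, Tdiag, div_self hc.ne']
    ring
  have hEoff : ∀ j j', j ≠ j' → E j j' = T j j' / c := by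
    intro j j' hjj
    simp only [hEdef, Matrix.sub_apply, Matrix.one_apply_ne hjj, entry]
    ring
  have hEsymm : ∀ j j', E j j' = E j' j := by
    intro j j'
    by_cases h : j = j'
    · rw [h]
    · rw [hEoff j j' h, hEoff j' j (Ne.symm h), Tsymm]
  -- pair counts
  set n₂ : S × S → Fin k → Fin k → ℝ := fun p j j' =>
    ((Finset.univ.filter fun i : Fin N => A i j = p.1 ∧ A i j' = p.2).card : ℝ) with hn₂def
  have pairsum : ∀ (j j' : Fin k) (g : S → S → ℝ),
      ∑ i : Fin N, g (A i j) (A i j') = ∑ p : S × S, n₂ p j j' * g p.1 p.2 := by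
    intro j j' g
    rw [← Finset.sum_fiberwise Finset.univ (fun i => (A i j, A i j'))
      (fun i => g (A i j) (A i j'))]
    refine Finset.sum_congr rfl fun p _ => ?_
    have hfe : Finset.univ.filter (fun i : Fin N => (A i j, A i j') = p)
        = Finset.univ.filter (fun i : Fin N => A i j = p.1 ∧ A i j' = p.2) := by
      apply Finset.filter_congr
      intro i _
      simp [Prod.ext_iff]
    have h1 : ∀ i ∈ Finset.univ.filter (fun i : Fin N => A i j = p.1 ∧ A i j' = p.2),
        g (A i j) (A i j') = g p.1 p.2 := by
      intro i hi
      obtain ⟨ha, hb⟩ := (Finset.mem_filter.mp hi).2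
      rw [ha, hb]
    rw [hfe, Finset.sum_congr rfl h1, Finset.sum_const, nsmul_eq_mul]
  set lam : ℝ := (N:ℝ) / (s:ℝ)^2 with hlamdef
  have hzero : ∑ p : S × S, lam * (f p.1 * f p.2) = 0 := by
    rw [Fintype.sum_prod_type]
    have h1 : ∀ a : S, ∑ b : S, lam * (f a * f b) = lam * f a * ∑ b : S, f b := by
      intro a; rw [Finset.mul_sum]; exact Finset.sum_congr rfl fun b _ => by ring
    rw [Finset.sum_congr rfl fun a _ => h1 a]
    simp [hsum]
  have Tdecomp : ∀ j j', T j j' = ∑ p : S × S, (n₂ p j j' - lam) * (f p.1 * f p.2) := by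
    intro j j'
    simp only [hTdef]
    rw [pairsum j j' (fun a b => f a * f b)]
    rw [← sub_zero (∑ p : S × S, n₂ p j j' * (f p.1 * f p.2)), ← hzero,
      ← Finset.sum_sub_distrib]
    exact Finset.sum_congr rfl fun p _ => by ring
  set D : Fin k → Fin k → ℝ := fun j j' => ∑ p : S × S, (n₂ p j j' - lam)^2 with hDdef
  have hQ2 : ∑ p : S × S, (f p.1 * f p.2)^2 = Q^2 := by
    rw [sq Q, hQdef, Finset.sum_mul_sum, Fintype.sum_prod_type]
    exact Finset.sum_congr rfl fun a _ => Finset.sum_congr rfl fun b _ => by ring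
  have CS : ∀ j j', (T j j')^2 ≤ D j j' * Q^2 := by
    intro j j'
    rw [Tdecomp]
    simp only [hDdef]
    rw [← hQ2]
    exact Finset.sum_mul_sq_le_sq_mul_sq Finset.univ _ _
  have hc2 : c^2 = ((l:ℝ)*(s:ℝ))^2 * Q^2 := by
    rw [hcdef, hNs, mul_pow]
    congr 1
    rw [div_pow]
    field_simp
  have Ebound : ∀ j j', j ≠ j' → (E j j')^2 ≤ D j j' / ((l:ℝ)*(s:ℝ))^2 := by
    intro j j' hjj
    rw [hEoff j j' hjj, div_pow]
    have h1 : (T j j')^2 / c^2 ≤ (D j j' * Q^2) / c^2 :=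
      div_le_div_of_nonneg_right (CS j j') (by positivity)
    refine h1.trans_eq ?_
    rw [hc2]
    have hQne : Q^2 ≠ 0 := by positivity
    have hls : ((l:ℝ)*(s:ℝ))^2 ≠ 0 := by positivity
    field_simp
  -- Unb identity
  set P : Finset (Fin k × Fin k) := Finset.univ.filter (fun p : Fin k × Fin k => p.1 < p.2)
    with hPdef
  have n₂row : ∀ (x : Fin 2 → S) (jt : Fin 2 → Fin k),
      (rowCount A x jt : ℝ) = n₂ (x 0, x 1) (jt 0) (jt 1) := by
    intro x jt
    simp only [hn₂def]
    unfold rowCount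
    have hfe : (Finset.univ.filter fun i : Fin N => ∀ r, A i (jt r) = x r)
        = Finset.univ.filter fun i : Fin N => A i (jt 0) = x 0 ∧ A i (jt 1) = x 1 := by
      apply Finset.filter_congr
      intro i _
      simp [Fin.forall_fin_two]
    rw [hfe]
  have hUnb : Unb s 2 2 A = ∑ p ∈ P, D p.1 p.2 := by
    unfold Unb
    have h2 : ∀ a : ℝ, |a| ^ (2:ℝ) = a ^ 2 := fun a => by
      rw [show (2:ℝ) = ((2:ℕ):ℝ) by norm_num, Real.rpow_natCast, sq_abs]
    simp only [h2]
    rw [Finset.sum_comm, ← hlamdef]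
    refine Finset.sum_nbij' (fun jt : Fin 2 → Fin k => (jt 0, jt 1))
      (fun p : Fin k × Fin k => ![p.1, p.2]) ?_ ?_ ?_ ?_ ?_
    · intro jt hjt
      rw [Finset.mem_filter] at hjt
      rw [hPdef, Finset.mem_filter]
      exact ⟨Finset.mem_univ _, hjt.2 (by norm_num : (0 : Fin 2) < 1)⟩
    · intro p hp
      rw [hPdef, Finset.mem_filter] at hp
      rw [Finset.mem_filter]
      refine ⟨Finset.mem_univ _, ?_⟩
      rw [strictMono_fin_two_iff]
      simpa using hp.2
    · intro jt _
      funext r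
      fin_cases r <;> simp
    · intro p _
      simp
    · intro jt _
      simp only [hDdef]
      refine Fintype.sum_equiv (piFinTwoEquiv (fun _ => S)) _ _ fun x => ?_
      rw [n₂row x jt]
      rfl
  -- main chain
  have hfrob : ∑ i : Fin k, ∑ j : Fin k, (E i j)^2
      ≤ 2 * Unb s 2 2 A / ((l:ℝ)*(s:ℝ))^2 := by
    rw [sum_symm_eq_two_mul (fun j j' => (E j j')^2)
      (fun j => by show (E j j)^2 = 0; rw [hEdiag j]; ring)
      (fun j j' => by show (E j j')^2 = (E j' j)^2; rw [hEsymm j j'])]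
    rw [hUnb, mul_div_assoc, Finset.sum_div, Finset.mul_sum, ← hPdef, Finset.mul_sum]
    refine Finset.sum_le_sum fun p hp => ?_
    rw [hPdef, Finset.mem_filter] at hp
    exact mul_le_mul_of_nonneg_left (Ebound p.1 p.2 (ne_of_lt hp.2)) (by norm_num)
  have hmain : ∑ i : Fin k, ∑ j : Fin k,
      (((Xmat f A)ᵀ * Xmat f A - 1 : Matrix (Fin k) (Fin k) ℝ) i j) ^ 2
      = ∑ i : Fin k, ∑ j : Fin k, (E i j)^2 := rfl
  rw [hmain]
  have hUnbnn : 0 ≤ Unb s 2 2 A := by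
    unfold Unb
    refine Finset.sum_nonneg fun x _ => Finset.sum_nonneg fun j _ => ?_
    exact Real.rpow_nonneg (abs_nonneg _) _
  have heq : Real.sqrt (2 * Unb s 2 2 A / ((l:ℝ)*(s:ℝ))^2)
      = Real.sqrt (2 * Unb s 2 2 A) / ((l:ℝ)*(s:ℝ)) := by
    rw [Real.sqrt_div (by linarith) _, Real.sqrt_sq (by positivity)]
  exact le_of_le_of_eq (Real.sqrt_le_sqrt hfrob) heq
end

section
/- Let S be a finite set of size s, let f : S → ℝ be a non-constant function with Σ_{x∈S} f(x) = 0, and let A ∈ S^{N×k} be an N×k array with entries in S that is an OA(N,k,s,1), with N = λs². Define X(A,f) by X_{i,j} := f(A_{i,j}) / sqrt(Σ_{i'=1}^{N} f(A_{i',j})²), and set σ₁(f) := min_{α∈ℝ} (1/s)·Σ_{x∈S} |f(x) − α| and σ₂(f) := min_{α∈ℝ} sqrt((1/s)·Σ_{x∈S} |f(x) − α|²). Then ‖X(A,f)^T X(A,f) − I‖_max ≤ (1/λ)·(σ₁(f)/σ₂(f))²·Tol₂(A) ≤ (1/λ)·Tol₂(A), where ‖M‖_max := max_{i,j} |M_{i,j}|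 and I is the k×k identity matrix. -/
open Finset Matrix

section Helpers

lemma fiber_sum {n : ℕ} {β : Type*} [Fintype β] [DecidableEq β] (h : Fin n → β) (g : β → ℝ) :
    ∑ i, g (h i) = ∑ b : β, ((Finset.univ.filter fun i => h i = b).card : ℝ) * g b := by
  rw [← Finset.sum_fiberwise Finset.univ h fun i => g (h i)]
  refine Finset.sum_congr rfl fun b _ => ?_
  calc ∑ i ∈ Finset.univ.filter fun i => h i = b, g (h i)
      = ∑ i ∈ Finset.univ.filter fun i => h i = b, g b :=
        Finset.sum_congr rfl fun i hi => by rw [(Finset.mem_filter.mp hi).2]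
    _ = _ := by rw [Finset.sum_const, nsmul_eq_mul]

lemma aux_sqrt (C e : ℝ) (hC : 0 ≤ C) (g : ℝ → ℝ) (hg : ∀ α, 0 ≤ g α)
    (H : ∀ α, e ≤ C * g α ^ 2) : e ≤ C * (⨅ α, g α) ^ 2 := by
  rcases hC.eq_or_lt with h | h
  · have := H 0; rw [← h] at this ⊢; simpa using this
  · have he' : ∀ α, Real.sqrt (e / C) ≤ g α := by
      intro α
      have : e / C ≤ g α ^ 2 := (div_le_iff₀ h).mpr (by linarith [H α, mul_comm C (g α ^ 2)])
      calc Real.sqrt (e / C) ≤ Real.sqrt (g α ^ 2) := Real.sqrt_le_sqrt this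
        _ = g α := Real.sqrt_sq (hg α)
    have h2 : Real.sqrt (e / C) ≤ ⨅ α, g α := le_ciInf he'
    have h3 : e / C ≤ (⨅ α, g α) ^ 2 := by
      rcases le_or_gt (e / C) 0 with h4 | h4
      · exact h4.trans (sq_nonneg _)
      · calc e / C = Real.sqrt (e / C) ^ 2 := (Real.sq_sqrt h4.le).symm
          _ ≤ (⨅ α, g α) ^ 2 := by
              have : 0 ≤ Real.sqrt (e / C) := Real.sqrt_nonneg _
              exact pow_le_pow_left₀ this h2 2
    calc e = C * (e / C) := by field_simp
      _ ≤ C * (⨅ α, g α) ^ 2 := by exact mul_le_mul_of_nonneg_left h3 hC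

end Helpers

section Helpers2
variable {S : Type*} [Fintype S] [DecidableEq S]

lemma sigma2_eq {s : ℕ} (hcard : Fintype.card S = s) (hs : 0 < (s:ℝ)) (f : S → ℝ)
    (hsum : ∑ x : S, f x = 0) :
    sigma2 s f = Real.sqrt ((∑ x : S, f x ^ 2) / s) := by
  have hval : ∀ α : ℝ, (∑ x : S, |f x - α| ^ 2) = (∑ x : S, f x ^ 2) + s * α ^ 2 := by
    intro α
    have : ∀ x : S, |f x - α| ^ 2 = f x ^ 2 - 2 * α * f x + α ^ 2 := by
      intro x; rw [sq_abs]; ring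
    rw [Finset.sum_congr rfl fun x _ => this x]
    rw [Finset.sum_add_distrib, Finset.sum_sub_distrib, ← Finset.mul_sum, hsum,
      Finset.sum_const, Finset.card_univ, hcard, nsmul_eq_mul]
    ring
  unfold sigma2
  refine le_antisymm ?_ ?_
  · have hb : BddBelow (Set.range fun α : ℝ => Real.sqrt ((∑ x : S, |f x - α| ^ 2) / s)) :=
      ⟨0, by rintro y ⟨α, rfl⟩; exact Real.sqrt_nonneg _⟩
    refine (ciInf_le hb (0 : ℝ)).trans ?_
    rw [hval 0]
    norm_num
  · refine le_ciInf fun α => ?_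
    rw [hval α]
    apply Real.sqrt_le_sqrt
    gcongr
    linarith [mul_nonneg hs.le (sq_nonneg α)]

end Helpers2

section Helpers3
variable {S : Type*} [Fintype S] [DecidableEq S]

lemma strictMono_fin_one {k : ℕ} (j : Fin 1 → Fin k) : StrictMono j :=
  fun a b hab => absurd (Subsingleton.elim a b) hab.ne

lemma count1 {s N k : ℕ} {A : Fin N → Fin k → S} (hA : IsOA s 1 A) (j : Fin k) (v : S) :
    ((Finset.univ.filter fun i : Fin N => A i j = v).card : ℝ) = N / s := by
  have := hA (fun _ => v) (fun _ => j) (strictMono_fin_one _)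
  rw [pow_one] at this
  rw [← this]
  congr 1
  simp [rowCount]

lemma col_sq {s N k : ℕ} {A : Fin N → Fin k → S} (hA : IsOA s 1 A) (f : S → ℝ) (j : Fin k) :
    ∑ i : Fin N, f (A i j) ^ 2 = ((N : ℝ) / s) * ∑ x : S, f x ^ 2 := by
  have h := fiber_sum (fun i => A i j) (fun v => f v ^ 2)
  rw [h, Finset.mul_sum]
  exact Finset.sum_congr rfl fun v _ => by rw [count1 hA j v]

lemma pair_bound {s N k : ℕ} (hcard : Fintype.card S = s) (hs : (0:ℝ) < s)
    (f : S → ℝ) (hsum : ∑ x : S, f x = 0) {A : Fin N → Fin k → S} (hA : IsOA s 1 A)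
    {p q : Fin k} (hpq : p < q) (α : ℝ) :
    |∑ i : Fin N, f (A i p) * f (A i q)| ≤ Tol s 2 A * (∑ x : S, |f x - α|) ^ 2 := by
  have hmono : StrictMono ![p, q] := by
    intro a b hab
    fin_cases a <;> fin_cases b <;> simp_all
  set n : S → S → ℝ := fun v w => (rowCount A ![v, w] ![p, q] : ℝ) with hn
  set NN : ℝ := (N : ℝ) / (s : ℝ) ^ 2 with hNN
  have hfilter : ∀ v w : S, rowCount A ![v, w] ![p, q] =
      (Finset.univ.filter fun i : Fin N => A i p = v ∧ A i q = w).card := by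
    intro v w
    unfold rowCount
    congr 1
    ext i
    simp [Fin.forall_fin_two]
  have hrow : ∀ v : S, ∑ w : S, n v w = (N : ℝ) / s := by
    intro v
    have h1 : (Finset.univ.filter fun i : Fin N => A i p = v).card
        = ∑ w : S, (Finset.univ.filter fun i : Fin N => A i p = v ∧ A i q = w).card := by
      rw [Finset.card_eq_sum_card_fiberwise (f := fun i => A i q) (t := Finset.univ)
        (fun x _ => Finset.mem_univ _)]
      exact Finset.sum_congr rfl fun w _ => by rw [Finset.filter_filter]
    have h2 := count1 hA p v
    rw [h1] at h2
    rw [← h2]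
    push_cast
    exact Finset.sum_congr rfl fun w _ => by rw [hn]; norm_num [hfilter v w]
  have hcol : ∀ w : S, ∑ v : S, n v w = (N : ℝ) / s := by
    intro w
    have h1 : (Finset.univ.filter fun i : Fin N => A i q = w).card
        = ∑ v : S, (Finset.univ.filter fun i : Fin N => A i p = v ∧ A i q = w).card := by
      rw [Finset.card_eq_sum_card_fiberwise (f := fun i => A i p) (t := Finset.univ)
        (fun x _ => Finset.mem_univ _)]
      refine Finset.sum_congr rfl fun v _ => by rw [Finset.filter_filter]; congr 1; ext i; simp only [Finset.mem_filter]; tauto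
    have h2 := count1 hA q w
    rw [h1] at h2
    rw [← h2]
    push_cast
    exact Finset.sum_congr rfl fun v _ => by rw [hn]; norm_num [hfilter v w]
  have hNNs : (s : ℝ) * NN = (N : ℝ) / s := by
    rw [hNN]; field_simp
  have hmrow : ∀ v : S, ∑ w : S, (n v w - NN) = 0 := by
    intro v
    rw [Finset.sum_sub_distrib, hrow v, Finset.sum_const, Finset.card_univ, hcard,
      nsmul_eq_mul, hNNs, sub_self]
  have hmcol : ∀ w : S, ∑ v : S, (n v w - NN) = 0 := by
    intro w
    rw [Finset.sum_sub_distrib, hcol w, Finset.sum_const, Finset.card_univ, hcard,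
      nsmul_eq_mul, hNNs, sub_self]
  -- rewrite the sum over rows as a double sum over symbol pairs
  have hT : ∑ i : Fin N, f (A i p) * f (A i q) = ∑ v : S, ∑ w : S, n v w * (f v * f w) := by
    have h := fiber_sum (fun i => (A i p, A i q)) (fun b : S × S => f b.1 * f b.2)
    simp only at h
    rw [h, Fintype.sum_prod_type]
    refine Finset.sum_congr rfl fun v _ => Finset.sum_congr rfl fun w _ => ?_
    rw [hn]
    norm_num [hfilter v w, Prod.ext_iff]
  -- the key identity
  have hkey : ∑ v : S, ∑ w : S, n v w * (f v * f w)
      = ∑ v : S, ∑ w : S, (n v w - NN) * ((f v - α) * (f w - α)) := by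
    have point : ∀ v w : S, (n v w - NN) * ((f v - α) * (f w - α))
        = n v w * (f v * f w) - NN * (f v * f w)
          - α * f w * (n v w - NN) - α * f v * (n v w - NN) + α ^ 2 * (n v w - NN) := by
      intro v w; ring
    rw [Finset.sum_congr rfl fun v _ => Finset.sum_congr rfl fun w _ => point v w]
    have e2 : ∑ v : S, ∑ w : S, NN * (f v * f w) = 0 := by
      refine Finset.sum_eq_zero fun v _ => ?_
      rw [← Finset.mul_sum, ← Finset.mul_sum, hsum, mul_zero, mul_zero]
    have e3 : ∑ v : S, ∑ w : S, α * f w * (n v w - NN) = 0 := by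
      rw [Finset.sum_comm]
      refine Finset.sum_eq_zero fun w _ => ?_
      rw [← Finset.mul_sum, hmcol w, mul_zero]
    have e4 : ∑ v : S, ∑ w : S, α * f v * (n v w - NN) = 0 := by
      refine Finset.sum_eq_zero fun v _ => ?_
      rw [← Finset.mul_sum, hmrow v, mul_zero]
    have e5 : ∑ v : S, ∑ w : S, α ^ 2 * (n v w - NN) = 0 := by
      refine Finset.sum_eq_zero fun v _ => ?_
      rw [← Finset.mul_sum, hmrow v, mul_zero]
    simp only [Finset.sum_add_distrib, Finset.sum_sub_distrib, e2, e3, e4, e5]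
    ring
  -- the tolerance bound
  have htol : ∀ v w : S, |n v w - NN| ≤ Tol s 2 A := by
    intro v w
    have hb1 : BddAbove (Set.range fun j : {j : Fin 2 → Fin k // StrictMono j} =>
        |(rowCount A ![v, w] j.1 : ℝ) - (N : ℝ) / (s : ℝ) ^ 2|) :=
      Set.Finite.bddAbove (Set.finite_range _)
    have hb2 : BddAbove (Set.range fun x : Fin 2 → S =>
        ⨆ j : {j : Fin 2 → Fin k // StrictMono j},
          |(rowCount A x j.1 : ℝ) - (N : ℝ) / (s : ℝ) ^ 2|) :=
      Set.Finite.bddAbove (Set.finite_range _)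
    calc |n v w - NN|
        ≤ ⨆ j : {j : Fin 2 → Fin k // StrictMono j},
            |(rowCount A ![v, w] j.1 : ℝ) - (N : ℝ) / (s : ℝ) ^ 2| :=
          le_ciSup hb1 ⟨![p, q], hmono⟩
      _ ≤ Tol s 2 A := le_ciSup hb2 ![v, w]
  -- conclude
  rw [hT, hkey]
  calc |∑ v : S, ∑ w : S, (n v w - NN) * ((f v - α) * (f w - α))|
      ≤ ∑ v : S, ∑ w : S, |(n v w - NN) * ((f v - α) * (f w - α))| := by
        refine (Finset.abs_sum_le_sum_abs _ _).trans ?_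
        exact Finset.sum_le_sum fun v _ => Finset.abs_sum_le_sum_abs _ _
    _ ≤ ∑ v : S, ∑ w : S, Tol s 2 A * (|f v - α| * |f w - α|) := by
        refine Finset.sum_le_sum fun v _ => Finset.sum_le_sum fun w _ => ?_
        rw [abs_mul, abs_mul]
        exact mul_le_mul_of_nonneg_right (htol v w)
          (mul_nonneg (abs_nonneg _) (abs_nonneg _))
    _ = Tol s 2 A * (∑ x : S, |f x - α|) ^ 2 := by
        rw [sq, Finset.sum_mul_sum]
        rw [Finset.mul_sum]
        exact Finset.sum_congr rfl fun v _ => by rw [Finset.mul_sum]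

end Helpers3

/-- If `A` is an OA of strength `1` with `N = λs²`, then the max-norm of
`X(A,f)ᵀX(A,f) − I` is at most `(1/λ)(σ₁(f)/σ₂(f))²·Tol₂(A) ≤ (1/λ)·Tol₂(A)`. -/
theorem statement8 {S : Type*} [Fintype S] [DecidableEq S] {s N k l : ℕ}
    (hcard : Fintype.card S = s) (f : S → ℝ)
    (hf : ∃ x y : S, f x ≠ f y) (hsum : ∑ x : S, f x = 0)
    (hN : N = l * s ^ 2) (hl : 0 < l)
    (A : Fin N → Fin k → S) (hA : IsOA s 1 A) :
    (⨆ i : Fin k, ⨆ j : Fin k, |(((Xmat f A)ᵀ * Xmat f A - 1 : Matrix (Fin k) (Fin k) ℝ) i j)|)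
        ≤ (1 / (l : ℝ)) * (sigma1 s f / sigma2 s f) ^ 2 * Tol s 2 A ∧
      (1 / (l : ℝ)) * (sigma1 s f / sigma2 s f) ^ 2 * Tol s 2 A
        ≤ (1 / (l : ℝ)) * Tol s 2 A := by
  obtain ⟨x₀, y₀, hxy⟩ := hf
  have hsS : 0 < s := by
    rw [← hcard]
    exact Fintype.card_pos_iff.mpr ⟨x₀⟩
  have hs : (0 : ℝ) < s := by exact_mod_cast hsS
  have hlR : (0 : ℝ) < l := by exact_mod_cast hl
  have hQ : 0 < ∑ x : S, f x ^ 2 := by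
    rcases (Finset.sum_nonneg fun x (_ : x ∈ Finset.univ) => sq_nonneg (f x)).lt_or_eq with h | h
    · exact h
    · exfalso
      have hz : ∀ x ∈ Finset.univ, f x ^ 2 = 0 :=
        (Finset.sum_eq_zero_iff_of_nonneg fun x _ => sq_nonneg (f x)).mp h.symm
      have h1 := hz x₀ (Finset.mem_univ _)
      have h2 := hz y₀ (Finset.mem_univ _)
      rw [pow_eq_zero_iff (by norm_num)] at h1 h2
      exact hxy (h1.trans h2.symm)
  set Q : ℝ := ∑ x : S, f x ^ 2 with hQdef
  have hD : (0 : ℝ) < l * s * Q := by positivity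
  have hNs : (N : ℝ) / s = l * s := by
    rw [hN]; push_cast; field_simp
  have hc : ∀ j : Fin k, ∑ i : Fin N, f (A i j) ^ 2 = (l : ℝ) * s * Q := by
    intro j
    rw [col_sq hA f j, hNs]
  have hTol0 : 0 ≤ Tol s 2 A :=
    Real.iSup_nonneg fun x => Real.iSup_nonneg fun j => abs_nonneg _
  have hs1nn : 0 ≤ sigma1 s f :=
    Real.iInf_nonneg fun α => by positivity
  have hσ2 : sigma2 s f = Real.sqrt (Q / s) := sigma2_eq hcard hs f hsum
  have hσ2pos : 0 < Real.sqrt (Q / s) := Real.sqrt_pos.mpr (by positivity)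
  set C : ℝ := Tol s 2 A * s ^ 2 / (l * s * Q) with hCdef
  have hC0 : 0 ≤ C := by positivity
  -- the RHS equals C * σ₁²
  have hRHS : (1 / (l : ℝ)) * (sigma1 s f / sigma2 s f) ^ 2 * Tol s 2 A
      = C * sigma1 s f ^ 2 := by
    rw [hσ2, div_pow, Real.sq_sqrt (by positivity : (0:ℝ) ≤ Q / s), hCdef]
    field_simp
  -- entry formula
  have hXentry : ∀ i j : Fin k, ((Xmat f A)ᵀ * Xmat f A - 1 : Matrix (Fin k) (Fin k) ℝ) i j
      = (∑ i' : Fin N, f (A i' i) * f (A i' j)) / ((l : ℝ) * s * Q)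
        - (if i = j then 1 else 0) := by
    intro i j
    have hsq : Real.sqrt ((l : ℝ) * s * Q) * Real.sqrt ((l : ℝ) * s * Q) = (l : ℝ) * s * Q :=
      Real.mul_self_sqrt hD.le
    simp only [Matrix.sub_apply, Matrix.mul_apply, Matrix.transpose_apply, Matrix.one_apply,
      Xmat, Matrix.of_apply, hc]
    congr 1
    rw [Finset.sum_div]
    exact Finset.sum_congr rfl fun i' _ => by rw [div_mul_div_comm, hsq]
  -- bound on each entry
  have hentry : ∀ i j : Fin k,
      |((Xmat f A)ᵀ * Xmat f A - 1 : Matrix (Fin k) (Fin k) ℝ) i j| ≤ C * sigma1 s f ^ 2 := by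
    intro i j
    by_cases hij : i = j
    · subst hij
      have : ∑ i' : Fin N, f (A i' i) * f (A i' i) = (l : ℝ) * s * Q := by
        rw [← hc i]
        exact Finset.sum_congr rfl fun i' _ => (sq (f (A i' i))).symm
      rw [hXentry i i, this, if_pos rfl, div_self hD.ne', sub_self, abs_zero]
      positivity
    · have hpair : ∀ α : ℝ, |∑ i' : Fin N, f (A i' i) * f (A i' j)|
          ≤ Tol s 2 A * (∑ x : S, |f x - α|) ^ 2 := by
        intro α
        rcases lt_or_gt_of_ne hij with h | h
        · exact pair_bound hcard hs f hsum hA h α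
        · have : ∑ i' : Fin N, f (A i' i) * f (A i' j)
              = ∑ i' : Fin N, f (A i' j) * f (A i' i) :=
            Finset.sum_congr rfl fun i' _ => mul_comm _ _
          rw [this]
          exact pair_bound hcard hs f hsum hA h α
      have hE : |((Xmat f A)ᵀ * Xmat f A - 1 : Matrix (Fin k) (Fin k) ℝ) i j|
          = |∑ i' : Fin N, f (A i' i) * f (A i' j)| / ((l : ℝ) * s * Q) := by
        rw [hXentry i j, if_neg hij, sub_zero, abs_div, abs_of_pos hD]
      rw [hE]
      have Hα : ∀ α : ℝ, |∑ i' : Fin N, f (A i' i) * f (A i' j)| / ((l : ℝ) * s * Q)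
          ≤ C * ((∑ x : S, |f x - α|) / s) ^ 2 := by
        intro α
        have h1 : C * ((∑ x : S, |f x - α|) / s) ^ 2
            = Tol s 2 A * (∑ x : S, |f x - α|) ^ 2 / ((l : ℝ) * s * Q) := by
          rw [hCdef]; field_simp
        rw [h1]
        exact div_le_div_of_nonneg_right (hpair α) hD.le
      exact aux_sqrt C _ hC0 (fun α => (∑ x : S, |f x - α|) / s)
        (fun α => by positivity) Hα
  constructor
  · rw [hRHS]
    refine Real.iSup_le (fun i => Real.iSup_le (fun j => hentry i j) (by positivity)) (by positivity)
  · have hσ1le : sigma1 s f ≤ Real.sqrt (Q / s) := by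
      have hb : BddBelow (Set.range fun α : ℝ => (∑ x : S, |f x - α|) / s) :=
        ⟨0, by rintro y ⟨α, rfl⟩; positivity⟩
      have h1 : sigma1 s f ≤ (∑ x : S, |f x - (0:ℝ)|) / s := ciInf_le hb 0
      refine h1.trans ?_
      rw [Real.le_sqrt (by positivity) (by positivity)]
      have h2 : (∑ x : S, |f x - (0:ℝ)|) ^ 2 ≤ (s : ℝ) * Q := by
        have h3 := sq_sum_le_card_mul_sum_sq (s := (Finset.univ : Finset S))
          (f := fun x => |f x - (0:ℝ)|)
        have h4 : ∑ x : S, |f x - (0:ℝ)| ^ 2 = Q := by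
          rw [hQdef]
          exact Finset.sum_congr rfl fun x _ => by rw [sub_zero, sq_abs]
        rw [h4, Finset.card_univ, hcard] at h3
        exact_mod_cast h3
      rw [div_pow]
      calc (∑ x : S, |f x - (0:ℝ)|) ^ 2 / (s:ℝ) ^ 2 ≤ ((s:ℝ) * Q) / (s:ℝ) ^ 2 :=
            div_le_div_of_nonneg_right h2 (by positivity)
        _ = Q / s := by field_simp
    have hr : (sigma1 s f / sigma2 s f) ^ 2 ≤ 1 := by
      rw [hσ2]
      exact pow_le_one₀ (div_nonneg hs1nn hσ2pos.le) ((div_le_one hσ2pos).mpr hσ1le)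
    calc (1 / (l : ℝ)) * (sigma1 s f / sigma2 s f) ^ 2 * Tol s 2 A
        ≤ (1 / (l : ℝ)) * 1 * Tol s 2 A := by
          refine mul_le_mul_of_nonneg_right (mul_le_mul_of_nonneg_left hr (by positivity)) hTol0
      _ = (1 / (l : ℝ)) * Tol s 2 A := by ring
end

section
/- Let S be a finite set of size s ≥ 2 and let f : S → ℝ be a non-constant function with Σ_{x∈S} f(x) = 0. Define σ₁(f) := min_{α∈ℝ} (1/s)·Σ_{x∈S} |f(x) − α| and σ₂(f) := min_{α∈ℝ} sqrt((1/s)·Σ_{x∈S} |f(x) − α|²). Then 1/(s−1) ≤ (σ₁(f)/σ₂(f))² ≤ 1. -/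
open Finset

private lemma key_ineq {S : Type*} [Fintype S] {s : ℕ} (hs : 2 ≤ s)
    (hcard : Fintype.card S = s) (g : S → ℝ) :
    (s : ℝ) * ∑ x : S, g x ^ 2 - (∑ x : S, g x) ^ 2 ≤
      ((s : ℝ) - 1) * (∑ x : S, |g x|) ^ 2 := by
  have hs' : (2 : ℝ) ≤ (s : ℝ) := by exact_mod_cast hs
  set p : S → ℝ := fun x => max (g x) 0 with hp
  set n : S → ℝ := fun x => max (-g x) 0 with hn
  have habs : ∀ x, |g x| = p x + n x := by
    intro x
    rcases le_total 0 (g x) with h | h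
    · rw [abs_of_nonneg h, hp, hn]; simp [max_eq_left h, max_eq_right (neg_nonpos.mpr h)]
    · rw [abs_of_nonpos h, hp, hn]; simp [max_eq_right h, max_eq_left (neg_nonneg.mpr h)]
  have hg : ∀ x, g x = p x - n x := by
    intro x
    rcases le_total 0 (g x) with h | h
    · rw [hp, hn]; simp [max_eq_left h, max_eq_right (neg_nonpos.mpr h)]
    · rw [hp, hn]; simp [max_eq_right h, max_eq_left (neg_nonneg.mpr h)]
  have hsq : ∀ x, g x ^ 2 = p x ^ 2 + n x ^ 2 := by
    intro x
    rcases le_total 0 (g x) with h | h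
    · rw [hp, hn]; simp [max_eq_left h, max_eq_right (neg_nonpos.mpr h)]
    · rw [hp, hn]; simp [max_eq_right h, max_eq_left (neg_nonneg.mpr h)]
  simp_rw [habs, hsq, hg]
  rw [Finset.sum_add_distrib, Finset.sum_sub_distrib, Finset.sum_add_distrib]
  have hPsum : ∑ x : S, p x ^ 2 ≤ (∑ x : S, p x) ^ 2 :=
    Finset.sum_sq_le_sq_sum_of_nonneg (fun i _ => le_max_right _ _)
  have hNsum : ∑ x : S, n x ^ 2 ≤ (∑ x : S, n x) ^ 2 :=
    Finset.sum_sq_le_sq_sum_of_nonneg (fun i _ => le_max_right _ _)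
  have hP0 : 0 ≤ ∑ x : S, p x := Finset.sum_nonneg (fun i _ => le_max_right _ _)
  have hN0 : 0 ≤ ∑ x : S, n x := Finset.sum_nonneg (fun i _ => le_max_right _ _)
  nlinarith [mul_nonneg hP0 hN0, mul_le_mul_of_nonneg_left hPsum (by linarith : (0:ℝ) ≤ (s:ℝ)),
    mul_le_mul_of_nonneg_left hNsum (by linarith : (0:ℝ) ≤ (s:ℝ)),
    mul_nonneg (mul_nonneg (by linarith : (0:ℝ) ≤ (s:ℝ) - 2) hP0) hN0]

/-- For a non-constant zero-sum `f` on a set of size `s ≥ 2`: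
`1/(s−1) ≤ (σ₁(f)/σ₂(f))² ≤ 1`. -/
theorem statement10 {S : Type*} [Fintype S] {s : ℕ} (hs : 2 ≤ s)
    (hcard : Fintype.card S = s) (f : S → ℝ)
    (hf : ∃ x y : S, f x ≠ f y) (hsum : ∑ x : S, f x = 0) :
    1 / ((s : ℝ) - 1) ≤ (sigma1 s f / sigma2 s f) ^ 2 ∧
      (sigma1 s f / sigma2 s f) ^ 2 ≤ 1 := by
  have hs' : (2 : ℝ) ≤ (s : ℝ) := by exact_mod_cast hs
  have hs0 : (0 : ℝ) < (s : ℝ) := by linarith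
  have hs1 : (0 : ℝ) < (s : ℝ) - 1 := by linarith
  set F := ∑ x : S, f x ^ 2 with hF
  -- F > 0 since f is non-constant with zero sum
  have hFpos : 0 < F := by
    obtain ⟨x, y, hxy⟩ := hf
    have hne : f x ≠ 0 ∨ f y ≠ 0 := by
      by_contra h
      push_neg at h
      exact hxy (h.1.trans h.2.symm)
    rcases hne with h | h
    · exact Finset.sum_pos' (fun i _ => sq_nonneg _)
        ⟨x, Finset.mem_univ x, pow_two_pos_of_ne_zero h⟩
    · exact Finset.sum_pos' (fun i _ => sq_nonneg _)
        ⟨y, Finset.mem_univ y, pow_two_pos_of_ne_zero h⟩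
  have hconst : ∀ α : ℝ, ∑ _x : S, α = (s : ℝ) * α := by
    intro α
    rw [Finset.sum_const, Finset.card_univ, hcard, nsmul_eq_mul]
  have e2 : ∀ α : ℝ, ∑ x : S, (f x - α) ^ 2 = F + (s : ℝ) * α ^ 2 := by
    intro α
    have h : ∀ x : S, (f x - α) ^ 2 = f x ^ 2 - (2 * α) * f x + α ^ 2 := fun x => by ring
    simp_rw [h]
    rw [Finset.sum_add_distrib, Finset.sum_sub_distrib, ← Finset.mul_sum, hsum, hconst]
    ring
  -- key lower bound for each α
  have hkey : ∀ α : ℝ, Real.sqrt (F / ((s : ℝ) * ((s : ℝ) - 1))) ≤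
      (∑ x : S, |f x - α|) / s := by
    intro α
    have h1 := key_ineq hs hcard (fun x => f x - α)
    have e1 : ∑ x : S, (f x - α) = -((s : ℝ) * α) := by
      rw [Finset.sum_sub_distrib, hsum, hconst]; ring
    rw [e1, e2 α] at h1
    have hT : 0 ≤ ∑ x : S, |f x - α| := Finset.sum_nonneg (fun i _ => abs_nonneg _)
    have h2 : F / ((s : ℝ) * ((s : ℝ) - 1)) ≤ ((∑ x : S, |f x - α|) / s) ^ 2 := by
      rw [div_pow, div_le_div_iff₀ (by positivity) (by positivity)]
      nlinarith [h1, hs0]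
    calc Real.sqrt (F / ((s : ℝ) * ((s : ℝ) - 1)))
        ≤ Real.sqrt (((∑ x : S, |f x - α|) / s) ^ 2) := Real.sqrt_le_sqrt h2
      _ = (∑ x : S, |f x - α|) / s := Real.sqrt_sq (by positivity)
  set c := Real.sqrt (F / ((s : ℝ) * ((s : ℝ) - 1))) with hc
  have hcpos : 0 < c := Real.sqrt_pos.mpr (by positivity)
  have hc2 : c ^ 2 = F / ((s : ℝ) * ((s : ℝ) - 1)) := Real.sq_sqrt (by positivity)
  have hbdd : BddBelow (Set.range fun α : ℝ => (∑ x : S, |f x - α|) / (s : ℝ)) := by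
    refine ⟨c, ?_⟩
    rintro _ ⟨α, rfl⟩
    exact hkey α
  have hσ1_ge : c ≤ sigma1 s f := le_ciInf hkey
  -- value of sigma2
  have hσ2 : sigma2 s f = Real.sqrt (F / s) := by
    unfold sigma2
    apply le_antisymm
    · have h := ciInf_le (f := fun α : ℝ => Real.sqrt ((∑ x : S, |f x - α| ^ 2) / s))
        ⟨0, by rintro _ ⟨α, rfl⟩; exact Real.sqrt_nonneg _⟩ 0
      simpa [sq_abs] using h
    · apply le_ciInf
      intro α
      apply Real.sqrt_le_sqrt
      simp_rw [sq_abs, e2 α]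
      apply div_le_div_of_nonneg_right _ hs0.le
      nlinarith [sq_nonneg α, hs0]
  have hσ2pos : 0 < sigma2 s f := by
    rw [hσ2]; exact Real.sqrt_pos.mpr (by positivity)
  have hσ2sq : sigma2 s f ^ 2 = F / s := by
    rw [hσ2, Real.sq_sqrt (by positivity)]
  -- sigma1 ≤ sigma2
  have hσ12 : sigma1 s f ≤ sigma2 s f := by
    unfold sigma1 sigma2
    refine ciInf_mono hbdd fun α => ?_
    have hT : 0 ≤ (∑ x : S, |f x - α|) / (s : ℝ) := by positivity
    rw [← Real.sqrt_sq hT]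
    apply Real.sqrt_le_sqrt
    rw [div_pow, div_le_div_iff₀ (by positivity) hs0]
    have hc := sq_sum_le_card_mul_sum_sq (s := (Finset.univ : Finset S))
      (f := fun x => |f x - α|)
    rw [Finset.card_univ, hcard] at hc
    have hsum2 : 0 ≤ ∑ x : S, |f x - α| ^ 2 := Finset.sum_nonneg (fun i _ => sq_nonneg _)
    nlinarith [hc, hs0, hsum2]
  have hσ1pos : 0 < sigma1 s f := lt_of_lt_of_le hcpos hσ1_ge
  have hσ1sq_ge : F / ((s : ℝ) * ((s : ℝ) - 1)) ≤ sigma1 s f ^ 2 := by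
    rw [← hc2]
    exact pow_le_pow_left₀ hcpos.le hσ1_ge 2
  constructor
  · rw [div_pow, div_le_div_iff₀ hs1 (by positivity)]
    have key : F / ((s : ℝ) * ((s : ℝ) - 1)) * ((s : ℝ) - 1) = F / s := by
      field_simp
    nlinarith [mul_le_mul_of_nonneg_right hσ1sq_ge hs1.le, key, hσ2sq]
  · rw [div_pow, div_le_one (by positivity)]
    exact pow_le_pow_left₀ hσ1pos.le hσ12 2
end

section
/- Let A be an N×k array with entries in {1,...,s} where s ≥ 2, k ≥ 2 and N = λs² for a positive integer λ, and let a > b > 0 be real numbers. Set γ := (λs − 1)k / (λs² − 1) and define DD²(A;a,b) := −((a−b)/s + b)^k + (b^k/N²)·Σ_{1 ≤ r, r̃ ≤ N} (a/b)^{H(A;r,r̃)}. Then DD²(A;a,b) ≥ −((a−b)/s + b)^k + a^k/(λs²) + b^k·(1 − 1/(λs²))·(1 + (a/b − 1)·(γ − ⌊γ⌋))·(a/b)^{⌊γ⌋}. -/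
open Finset

/-! With `q = a / b ≥ 1` and `m = ⌊γ⌋`, convexity of `n ↦ qⁿ` on the integers gives
`qⁿ ≥ qᵐ (1 + (q - 1)(n - m))` for all `n : ℕ` (the secant through `m` and `m + 1`). Summed over
the `N(N - 1)` off-diagonal pairs of rows, this reduces the bound to
`∑_{r ≠ r'} H(A; r, r') ≥ γ N (N - 1)`. In each column the number of pairs of agreeing rows is the
sum of the squared level counts, at least `N² / s` by Cauchy–Schwarz; so `∑_{r, r'} H ≥ k N² / s`,
and removing the diagonal, where `H = k`, leaves `k N (N / s - 1) = γ N (N - 1)`. -/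

theorem pow_mul_one_add_sub_mul_le_pow {q : ℝ} (hq : 0 < q) (m n : ℕ) :
    q ^ m * (1 + (q - 1) * ((n : ℝ) - m)) ≤ q ^ n := by
  rcases le_total m n with hmn | hnm
  · obtain ⟨d, rfl⟩ := Nat.exists_eq_add_of_le hmn
    have hbern := one_add_mul_sub_le_pow (by linarith : -1 ≤ q) d
    calc q ^ m * (1 + (q - 1) * (((m + d : ℕ) : ℝ) - m)) = q ^ m * (1 + d * (q - 1)) := by
          push_cast; ring
      _ ≤ q ^ m * q ^ d := by gcongr
      _ = q ^ (m + d) := (pow_add q m d).symm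
  · obtain ⟨d, rfl⟩ := Nat.exists_eq_add_of_le hnm
    have hbern := one_add_mul_sub_le_pow (by linarith [inv_pos.2 hq] : -1 ≤ q⁻¹) d
    -- `q - 1 ≥ 1 - q⁻¹` since their difference is `(q - 1)² / q`
    have hsecant : (1 : ℝ) + (q - 1) * ((n : ℝ) - ((n + d : ℕ) : ℝ)) ≤ 1 + d * (q⁻¹ - 1) := by
      have : 0 ≤ q⁻¹ + q - 2 := by
        have : q⁻¹ + q - 2 = (q - 1) ^ 2 / q := by field_simp; ring
        rw [this]; positivity
      push_cast
      nlinarith [(Nat.cast_nonneg d : (0 : ℝ) ≤ d)]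
    calc q ^ (n + d) * (1 + (q - 1) * ((n : ℝ) - ((n + d : ℕ) : ℝ)))
        ≤ q ^ (n + d) * q⁻¹ ^ d := by gcongr; exact hsecant.trans hbern
      _ = q ^ n := by rw [pow_add, inv_pow, mul_inv_cancel_right₀ (pow_ne_zero _ hq.ne')]

theorem card_mul_pow_mul_le_sum_pow {ι : Type*} (s : Finset ι) (h : ι → ℕ) {q γ : ℝ}
    (hq : 1 ≤ q) (m : ℕ) (hγ : γ * #s ≤ ∑ i ∈ s, (h i : ℝ)) :
    #s * q ^ m * (1 + (q - 1) * (γ - m)) ≤ ∑ i ∈ s, q ^ h i := calc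
  #s * q ^ m * (1 + (q - 1) * (γ - m))
      = q ^ m * (#s * (1 - (q - 1) * m) + (q - 1) * (γ * #s)) := by ring
  _ ≤ q ^ m * (#s * (1 - (q - 1) * m) + (q - 1) * ∑ i ∈ s, (h i : ℝ)) := by gcongr
  _ = ∑ i ∈ s, q ^ m * (1 + (q - 1) * ((h i : ℝ) - m)) := by
        simp only [mul_sub, mul_add, sum_add_distrib, sum_sub_distrib, sum_const, nsmul_eq_mul,
          ← mul_sum]
        ring
  _ ≤ ∑ i ∈ s, q ^ h i :=
        sum_le_sum fun i _ => pow_mul_one_add_sub_mul_le_pow (by linarith) m (h i)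

theorem sum_product_self_eq_sum_add_sum_offDiag {ι M : Type*} [DecidableEq ι] [AddCommMonoid M]
    (s : Finset ι) (f : ι × ι → M) :
    ∑ p ∈ s ×ˢ s, f p = ∑ i ∈ s, f (i, i) + ∑ p ∈ s.offDiag, f p := by
  rw [← diag_union_offDiag, sum_union (disjoint_diag_offDiag s), sum_diag]

theorem card_sq_le_card_mul_card_filter_eq {ι α : Type*} [Fintype ι] [Fintype α]
    [DecidableEq α] (f : ι → α) :
    Fintype.card ι ^ 2 ≤ Fintype.card α * #{p : ι × ι | f p.1 = f p.2} := by
  set c : α → ℕ := fun v => #{i | f i = v}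
  have hsum : ∑ v, c v = Fintype.card ι :=
    (card_eq_sum_card_fiberwise fun i _ => mem_univ (f i)).symm
  have hpairs : #{p : ι × ι | f p.1 = f p.2} = ∑ v, c v ^ 2 := by
    rw [card_eq_sum_card_fiberwise fun p _ => mem_univ (f p.1)]
    refine sum_congr rfl fun v _ => ?_
    rw [sq, ← card_product]
    congr 1
    ext ⟨i, j⟩
    simp only [mem_filter, mem_univ, true_and, mem_product]
    constructor
    · rintro ⟨hij, rfl⟩; exact ⟨rfl, hij.symm⟩
    · rintro ⟨rfl, hj⟩; exact ⟨hj.symm, rfl⟩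
  rw [hpairs, ← hsum]
  simpa using sq_sum_le_card_mul_sum_sq (s := univ) (f := c)

section Hamming

variable {S : Type*} [DecidableEq S] {N k : ℕ} (A : Fin N → Fin k → S)

theorem ham_self (r : Fin N) : Ham A r r = k := by
  simp [Ham]

theorem sum_sum_ham_eq_sum_card_filter :
    ∑ r, ∑ r', Ham A r r' = ∑ j, #{p : Fin N × Fin N | A p.1 j = A p.2 j} := by
  simp only [Ham, card_filter, Fintype.sum_prod_type]
  symm
  rw [sum_comm]
  exact sum_congr rfl fun r _ => sum_comm

theorem mul_sq_le_card_mul_sum_sum_ham [Fintype S] :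
    k * N ^ 2 ≤ Fintype.card S * ∑ r, ∑ r', Ham A r r' := by
  rw [sum_sum_ham_eq_sum_card_filter, mul_sum]
  simpa using sum_le_sum fun j (_ : j ∈ univ) => card_sq_le_card_mul_card_filter_eq (A · j)

theorem sum_sum_comp_ham {M : Type*} [AddCommMonoid M] (g : ℕ → M) :
    ∑ r, ∑ r', g (Ham A r r') =
      N • g k + ∑ p ∈ (univ : Finset (Fin N)).offDiag, g (Ham A p.1 p.2) := by
  rw [← Fintype.sum_prod_type' (f := fun r r' => g (Ham A r r')), ← univ_product_univ,
    sum_product_self_eq_sum_add_sum_offDiag univ fun p => g (Ham A p.1 p.2)]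
  simp [ham_self]

theorem mul_mul_sub_le_card_mul_sum_offDiag_ham [Fintype S] :
    (k * N * (N - Fintype.card S) : ℝ) ≤
      Fintype.card S * ∑ p ∈ (univ : Finset (Fin N)).offDiag, (Ham A p.1 p.2 : ℝ) := by
  have := (Nat.cast_le (α := ℝ)).2 (mul_sq_le_card_mul_sum_sum_ham A)
  push_cast at this
  rw [sum_sum_comp_ham A (fun h : ℕ => (h : ℝ)), nsmul_eq_mul] at this
  linarith

end Hamming

theorem statement14_general {s N k l : ℕ} (hs : 2 ≤ s) (hl : 0 < l)
    (hN : N = l * s ^ 2) {a b : ℝ} (hb : 0 < b) (hab : b < a)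
    (A : Fin N → Fin k → Fin s) (γ : ℝ)
    (hγ : γ = ((l : ℝ) * s - 1) * k / ((l : ℝ) * s ^ 2 - 1)) :
    -(((a - b) / (s : ℝ) + b) ^ k) + a ^ k / ((l : ℝ) * (s : ℝ) ^ 2) +
        b ^ k * (1 - 1 / ((l : ℝ) * (s : ℝ) ^ 2)) *
          (1 + (a / b - 1) * (γ - (⌊γ⌋₊ : ℝ))) * (a / b) ^ (⌊γ⌋₊ : ℕ)
      ≤ -(((a - b) / (s : ℝ) + b) ^ k) +
          ((b ^ k) / (N : ℝ) ^ 2) * ∑ r : Fin N, ∑ r' : Fin N, (a / b) ^ (Ham A r r') := by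
  have hsR : (2 : ℝ) ≤ s := by exact_mod_cast hs
  have hlR : (1 : ℝ) ≤ l := by exact_mod_cast hl
  have hNR : (N : ℝ) = l * s ^ 2 := by rw [hN]; push_cast; ring
  have hN1 : (1 : ℝ) ≤ N := by rw [hNR]; nlinarith
  set D := (univ : Finset (Fin N)).offDiag
  have hD : (#D : ℝ) = N * (N - 1) := by
    rw [offDiag_card, card_univ, Fintype.card_fin, Nat.cast_sub (Nat.le_mul_self N)]
    push_cast; ring
  have hγD : s * (γ * #D) = k * N * (N - s) := by
    have : γ * (N - 1) = (l * s - 1) * k := by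
      rw [hγ, hNR, div_mul_cancel₀]
      nlinarith
    rw [hD, show γ * (N * (N - 1)) = N * (γ * (N - 1)) by ring, this, hNR]
    ring
  have hHamD : γ * #D ≤ ∑ p ∈ D, (Ham A p.1 p.2 : ℝ) := by
    refine le_of_mul_le_mul_left ?_ (by linarith : (0 : ℝ) < s)
    simpa [hγD] using mul_mul_sub_le_card_mul_sum_offDiag_ham A
  have hoff := card_mul_pow_mul_le_sum_pow D (fun p => Ham A p.1 p.2)
    ((one_le_div hb).2 hab.le) ⌊γ⌋₊ hHamD
  rw [sum_sum_comp_ham A, ← hNR, nsmul_eq_mul]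
  calc _ = -(((a - b) / (s : ℝ) + b) ^ k) + b ^ k / (N : ℝ) ^ 2 * (N * (a / b) ^ k +
        #D * (a / b) ^ ⌊γ⌋₊ * (1 + (a / b - 1) * (γ - ⌊γ⌋₊))) := by
        rw [hD, div_pow a b k]; field_simp; ring
    _ ≤ _ := by gcongr

/-- Lower bound for the squared discrete discrepancy
`DD(A;a,b)² = −((a−b)/s + b)^k + (b^k/N²)·Σ_{r,r̃}(a/b)^{H(A;r,r̃)}` of an array with
`N = λs²` rows, in terms of `γ = (λs−1)k/(λs²−1)`. -/
theorem statement14 {s N k l : ℕ} (hs : 2 ≤ s) (hk : 2 ≤ k) (hl : 0 < l)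
    (hN : N = l * s ^ 2) {a b : ℝ} (hb : 0 < b) (hab : b < a)
    (A : Fin N → Fin k → Fin s) (γ : ℝ)
    (hγ : γ = ((l : ℝ) * s - 1) * k / ((l : ℝ) * s ^ 2 - 1)) :
    -(((a - b) / (s : ℝ) + b) ^ k) + a ^ k / ((l : ℝ) * (s : ℝ) ^ 2) +
        b ^ k * (1 - 1 / ((l : ℝ) * (s : ℝ) ^ 2)) *
          (1 + (a / b - 1) * (γ - (⌊γ⌋₊ : ℝ))) * (a / b) ^ (⌊γ⌋₊ : ℕ)
      ≤ -(((a - b) / (s : ℝ) + b) ^ k) +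
          ((b ^ k) / (N : ℝ) ^ 2) * ∑ r : Fin N, ∑ r' : Fin N, (a / b) ^ (Ham A r r') :=
  statement14_general hs hl hN hb hab A γ hγ
end

section
/- Let s be a prime power and let ℓ ≥ 2 and κ̃ be positive integers with κ̃ ≤ s·(s^{ℓ−1} − 1)/(s − 1). Then there exists an array A with s^ℓ runs, (s^ℓ − 1)/(s − 1) + κ̃ factors and s levels (entries in {1,...,s}) such that: (0) A is an orthogonal array of strength one; (1a) the subarray formed by the first (s^ℓ − 1)/(s − 1) columns of A is an orthogonal array of strength two; (1b) the subarray formed by the last κ̃ columns of A is an orthogonal array of strength two; (2) Tol₂(A) = s^{ℓ−2}; and (3) for every real p ∈ [1,∞), Unb_{p,2}(A) = κ̃·s²·(s − 1)·s^{(ℓ−2)p}. -/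
open Finset

/-!
Identify the runs with the points of `W = F × V`, where `F` is the field with `s` elements and
`V = F^(ℓ-1)`. The first columns are the linear forms on `W`, one per point of `ℙ(W*)`; the last
`κ̃` are the quadratic functions `(x, v) ↦ x² + γ x + μ v`, one per pair `(γ, [μ]) ∈ F × ℙ(V*)`.
Two non-proportional linear forms, or two distinct quadratic functions, take every pair of values
on exactly `s^(ℓ-2)` points. A linear form `φ` and the quadratic function of `(γ, [μ])` do so as
well unless `φ ∝ t x + μ v` for some `t`; then the cell `(c₁, c₂)` holds `s^(ℓ-2)` times the
number of roots of `x² + (γ - t) x = e`, with `e` affine in `(c₁, c₂)`, which is `0`, `1` or `2`.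
Hence every deviation is `0` or `s^(ℓ-2)`, which gives the tolerance, and the unbalance counts the
cells where this number of roots is not `1`. The pairs `(b, e)` for which `x² + b x = e` has a
single root are the `s` pairs `(-2x, -x²)`, so each quadratic column lies in `s²(s-1)` unbalanced
cells.
-/

open Function
open scoped LinearAlgebra.Projectivization

section CellCounts

variable {S : Type*} [DecidableEq S] {s t N k : ℕ}

lemma abs_rowCount_sub_eq_ite (hs : 0 < s) {A : Fin N → Fin k → S} {x : Fin t → S}
    {j : Fin t → Fin k} {r : ℕ} (hr : r ≤ 2) (h : rowCount A x j * s ^ t = N * r) :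
    |(rowCount A x j : ℝ) - N / (s : ℝ) ^ t| =
      if rowCount A x j * s ^ t = N then 0 else (N : ℝ) / (s : ℝ) ^ t := by
  have hst : (0 : ℝ) < (s : ℝ) ^ t := by positivity
  have hcount : (rowCount A x j : ℝ) = N / (s : ℝ) ^ t * r := by
    rw [eq_comm, div_mul_eq_mul_div, div_eq_iff hst.ne']
    exact_mod_cast h.symm
  have hmean : (0 : ℝ) ≤ N / (s : ℝ) ^ t := by positivity
  split_ifs with hbal
  · rw [hcount, abs_eq_zero, sub_eq_zero]
    rcases Nat.eq_zero_or_pos N with hN | hN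
    · simp [hN]
    · obtain rfl : r = 1 := Nat.eq_of_mul_eq_mul_left hN (by rw [← h, hbal, mul_one])
      ring
  · rw [hcount]
    interval_cases r
    · simp [abs_of_nonneg hmean]
    · exact absurd (h.trans (mul_one N)) hbal
    · rw [show (N : ℝ) / (s : ℝ) ^ t * ((2 : ℕ) : ℝ) - N / (s : ℝ) ^ t = N / (s : ℝ) ^ t by
        push_cast; ring, abs_of_nonneg hmean]

variable [Fintype S]

lemma Unb_eq_of_cells_le_twice (hs : 0 < s) (A : Fin N → Fin k → S) {p : ℝ} (hp : p ≠ 0)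
    (hA : ∀ (x : Fin t → S) (j : Fin t → Fin k), StrictMono j →
      ∃ r ≤ 2, rowCount A x j * s ^ t = N * r) :
    Unb s p t A = (∑ j ∈ univ.filter (StrictMono : (Fin t → Fin k) → Prop),
        #{x | rowCount A x j * s ^ t ≠ N} : ℕ) * ((N : ℝ) / (s : ℝ) ^ t) ^ p := by
  unfold Unb
  rw [Finset.sum_comm, Nat.cast_sum, Finset.sum_mul]
  refine Finset.sum_congr rfl fun j hj => ?_
  rw [Finset.mem_filter] at hj
  rw [← Finset.sum_boole, Finset.sum_mul]
  refine Finset.sum_congr rfl fun x _ => ?_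
  obtain ⟨r, hr, hcount⟩ := hA x j hj.2
  rw [abs_rowCount_sub_eq_ite hs hr hcount]
  by_cases hbal : rowCount A x j * s ^ t = N <;> simp [hbal, Real.zero_rpow hp]

lemma Tol_eq_of_cells_le_twice (hs : 0 < s) (A : Fin N → Fin k → S)
    (hA : ∀ (x : Fin t → S) (j : Fin t → Fin k), StrictMono j →
      ∃ r ≤ 2, rowCount A x j * s ^ t = N * r)
    (hunbal : ∑ j ∈ univ.filter (StrictMono : (Fin t → Fin k) → Prop),
      #{x | rowCount A x j * s ^ t ≠ N} ≠ 0) :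
    Tol s t A = N / (s : ℝ) ^ t := by
  obtain ⟨j₀, hj₀, hne⟩ := exists_ne_zero_of_sum_ne_zero hunbal
  obtain ⟨x₀, hx₀⟩ := card_ne_zero.1 hne
  rw [mem_filter] at hj₀ hx₀
  have habs : ∀ x (j : {j : Fin t → Fin k // StrictMono j}),
      |(rowCount A x j.1 : ℝ) - N / (s : ℝ) ^ t| =
        if rowCount A x j.1 * s ^ t = N then 0 else (N : ℝ) / (s : ℝ) ^ t := fun x j => by
    obtain ⟨r, hr, hcount⟩ := hA x j.1 j.2
    exact abs_rowCount_sub_eq_ite hs hr hcount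
  have : Nonempty (Fin t → S) := ⟨x₀⟩
  have : Nonempty {j : Fin t → Fin k // StrictMono j} := ⟨⟨j₀, hj₀.2⟩⟩
  unfold Tol
  apply le_antisymm
  · refine ciSup_le fun x => ciSup_le fun j => ?_
    rw [habs]
    split_ifs
    · positivity
    · exact le_rfl
  · calc (N : ℝ) / (s : ℝ) ^ t = |(rowCount A x₀ j₀ : ℝ) - N / (s : ℝ) ^ t| := by
          rw [habs x₀ ⟨j₀, hj₀.2⟩, if_neg hx₀.2]
      _ ≤ ⨆ j : {j : Fin t → Fin k // StrictMono j},
            |(rowCount A x₀ j.1 : ℝ) - N / (s : ℝ) ^ t| :=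
          le_ciSup (f := fun j : {j : Fin t → Fin k // StrictMono j} =>
            |(rowCount A x₀ j.1 : ℝ) - N / (s : ℝ) ^ t|) (Set.finite_range _).bddAbove ⟨j₀, hj₀.2⟩
      _ ≤ _ := le_ciSup (f := fun x => ⨆ j : {j : Fin t → Fin k // StrictMono j},
            |(rowCount A x j.1 : ℝ) - N / (s : ℝ) ^ t|) (Set.finite_range _).bddAbove x₀

end CellCounts

section ColumnArray

variable {F M : Type*} [DecidableEq F] [Fintype M]

def pairCount (f g : M → F) (c₁ c₂ : F) : ℕ := #{w | f w = c₁ ∧ g w = c₂}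

lemma pairCount_comm (f g : M → F) (c₁ c₂ : F) :
    pairCount f g c₁ c₂ = pairCount g f c₂ c₁ := by
  simp only [pairCount, and_comm]

variable {s N k : ℕ}

def columnArray (e : Fin N ≃ M) (σ : F ≃ Fin s) (cols : Fin k → M → F) :
    Fin N → Fin k → Fin s :=
  fun i j => σ (cols j (e i))

variable (e : Fin N ≃ M) (σ : F ≃ Fin s) (cols : Fin k → M → F)

lemma rowCount_columnArray {t : ℕ} (x : Fin t → Fin s) (j : Fin t → Fin k) :
    rowCount (columnArray e σ cols) x j = #{w | ∀ r, cols (j r) w = σ.symm (x r)} := by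
  refine card_equiv e fun i => ?_
  simp only [Finset.mem_filter, Finset.mem_univ, true_and]
  simp [columnArray, Equiv.eq_symm_apply]

lemma rowCount_columnArray_two (x : Fin 2 → Fin s) (j : Fin 2 → Fin k) :
    rowCount (columnArray e σ cols) x j =
      pairCount (cols (j 0)) (cols (j 1)) (σ.symm (x 0)) (σ.symm (x 1)) := by
  simp [rowCount_columnArray, pairCount, Fin.forall_fin_two]

lemma isOA_columnArray {t : ℕ} (hs : 0 < s)
    (h : ∀ j : Fin t → Fin k, StrictMono j → ∀ c : Fin t → F,
      #{w | ∀ r, cols (j r) w = c r} * s ^ t = Fintype.card M) :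
    IsOA s t (columnArray e σ cols) := by
  intro x j hj
  rw [rowCount_columnArray, eq_div_iff (by positivity), ← Fintype.card_fin N,
    Fintype.card_congr e]
  exact_mod_cast h j hj _

lemma isOA_one_columnArray (hs : 0 < s)
    (h : ∀ j c, #{w | cols j w = c} * s = Fintype.card M) :
    IsOA s 1 (columnArray e σ cols) :=
  isOA_columnArray e σ cols hs fun j _ c => by simpa [Fin.forall_fin_one] using h (j 0) (c 0)

lemma isOA_two_columnArray (hs : 0 < s)
    (h : ∀ j j', j < j' → ∀ c₁ c₂, pairCount (cols j) (cols j') c₁ c₂ * s ^ 2 = Fintype.card M) :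
    IsOA s 2 (columnArray e σ cols) :=
  isOA_columnArray e σ cols hs fun j hj c => by
    simpa [pairCount, Fin.forall_fin_two] using h (j 0) (j 1) (hj Fin.zero_lt_one) (c 0) (c 1)

lemma card_filter_rowCount_columnArray_two [Fintype F] (P : ℕ → Prop) [DecidablePred P]
    (j : Fin 2 → Fin k) :
    #{x | P (rowCount (columnArray e σ cols) x j)} =
      #{c : F × F | P (pairCount (cols (j 0)) (cols (j 1)) c.1 c.2)} :=
  card_equiv ((piFinTwoEquiv fun _ => Fin s).trans (σ.symm.prodCongr σ.symm)) fun x => by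
    simp [rowCount_columnArray_two]

end ColumnArray

section PairsOfColumns

variable {R : Type*} [AddCommMonoid R]

lemma sum_strictMono_fin_two {n : ℕ} (G : Fin n → Fin n → R) :
    ∑ j ∈ univ.filter (StrictMono : (Fin 2 → Fin n) → Prop), G (j 0) (j 1) =
      ∑ i, ∑ i', if i < i' then G i i' else 0 := by
  rw [← Fintype.sum_prod_type' (f := fun i i' => if i < i' then G i i' else 0),
    ← Finset.sum_filter]
  refine Finset.sum_nbij' (fun j => (j 0, j 1)) (fun p => ![p.1, p.2]) ?_ ?_ ?_ ?_ ?_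
  · intro j hj
    simp only [mem_filter, mem_univ, true_and] at hj ⊢
    exact hj Fin.zero_lt_one
  · intro p hp
    simp only [mem_filter, mem_univ, true_and] at hp ⊢
    simpa [strictMono_vecCons] using hp
  · intro j _
    ext r
    fin_cases r <;> rfl
  · intro p _
    rfl
  · intro j _
    rfl

lemma sum_strictMono_fin_add {m κ : ℕ} (G : Fin (m + κ) → Fin (m + κ) → R)
    (hleft : ∀ a a' : Fin m, a < a' → G (Fin.castAdd κ a) (Fin.castAdd κ a') = 0)
    (hright : ∀ b b' : Fin κ, b < b' → G (Fin.natAdd m b) (Fin.natAdd m b') = 0) :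
    ∑ j ∈ univ.filter (StrictMono : (Fin 2 → Fin (m + κ)) → Prop), G (j 0) (j 1) =
      ∑ a : Fin m, ∑ b : Fin κ, G (Fin.castAdd κ a) (Fin.natAdd m b) := by
  rw [sum_strictMono_fin_two]
  have hcross (a : Fin m) (b : Fin κ) : Fin.castAdd κ a < Fin.natAdd m b := by
    simp only [Fin.lt_def, Fin.val_castAdd, Fin.val_natAdd]
    omega
  have hL (a : Fin m) :
      ∑ a', (if Fin.castAdd κ a < Fin.castAdd κ a' then G (Fin.castAdd κ a) (Fin.castAdd κ a')
        else 0) = 0 :=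
    sum_eq_zero fun a' _ => ite_eq_right_iff.2 fun h =>
      hleft a a' ((Fin.strictMono_castAdd κ).lt_iff_lt.1 h)
  have hR (b : Fin κ) :
      ∑ b', (if Fin.natAdd m b < Fin.natAdd m b' then G (Fin.natAdd m b) (Fin.natAdd m b')
        else 0) = 0 :=
    sum_eq_zero fun b' _ => ite_eq_right_iff.2 fun h =>
      hright b b' ((Fin.natAdd_lt_natAdd_iff m).1 h)
  simp only [Fin.sum_univ_add, hL, hR, hcross, (hcross _ _).not_gt, if_true, if_false,
    sum_const_zero, zero_add, add_zero]

end PairsOfColumns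

lemma AddMonoidHom.card_filter_eq_mul_card {G T : Type*} [AddGroup G] [Fintype G] [AddMonoid T]
    [Fintype T] [DecidableEq T] (f : G →+ T) (hf : Surjective f) (t : T) :
    #{g | f g = t} * Fintype.card T = Fintype.card G := by
  have hfiber (t' : T) : #{g | f g = t'} = #{g | f g = t} :=
    AddMonoidHom.card_fiber_eq_of_mem_range f (hf t') (hf t)
  calc #{g | f g = t} * Fintype.card T = ∑ t' : T, #{g | f g = t'} := by simp [hfiber, mul_comm]
    _ = Fintype.card G :=
      (Finset.card_eq_sum_card_fiberwise (s := univ) fun _ _ => mem_univ (f _)).symm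

lemma card_filter_prod_eq_sum {α β : Type*} [Fintype α] [Fintype β] (P : α → β → Prop)
    [∀ x, DecidablePred (P x)] :
    #{w : α × β | P w.1 w.2} = ∑ x, #{y | P x y} := by
  simp only [card_filter, Fintype.sum_prod_type]

lemma card_filter_snd_sub_mul_fst {R : Type*} [Ring R] [Fintype R] (p : R → Prop)
    [DecidablePred p] (a : R) : #{c : R × R | p (c.2 - a * c.1)} = Fintype.card R * #{e | p e} := by
  rw [← card_univ, ← card_product, ← filter_product_right]
  exact card_equiv ((Equiv.refl R).prodShear fun c₁ => Equiv.subRight (a * c₁)) fun c => by simp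

section LinearForms

variable {F V : Type*} [Field F] [AddCommGroup V] [Module F V]

lemma card_filter_eq_of_ne_zero [Fintype F] [DecidableEq F] [Fintype V] {φ : V →ₗ[F] F}
    (hφ : φ ≠ 0) (c : F) :
    #{v | φ v = c} * Fintype.card F = Fintype.card V :=
  φ.toAddMonoidHom.card_filter_eq_mul_card (LinearMap.surjective_of_ne_zero hφ) c

lemma surjective_prod_of_forall_ne_smul {φ ψ : V →ₗ[F] F} (hψ : ψ ≠ 0)
    (h : ∀ c : F, φ ≠ c • ψ) : Surjective (φ.prod ψ) := by
  obtain ⟨v, hv⟩ := LinearMap.surjective_of_ne_zero hψ 1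
  obtain ⟨u, hu, hφu⟩ : ∃ u, ψ u = 0 ∧ φ u ≠ 0 := by
    by_contra! hker
    refine h (φ v) (LinearMap.ext fun w => ?_)
    have := hker (w - ψ w • v) (by simp [hv])
    rw [map_sub, map_smul, smul_eq_mul, sub_eq_zero] at this
    simp [this, mul_comm]
  rintro ⟨a, b⟩
  refine ⟨b • v + ((a - b * φ v) / φ u) • u, ?_⟩
  simp [hv, hu, hφu]

lemma card_filter_and_eq_of_forall_ne_smul [Fintype F] [DecidableEq F] [Fintype V]
    {φ ψ : V →ₗ[F] F} (hψ : ψ ≠ 0)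
    (h : ∀ c : F, φ ≠ c • ψ) (c₁ c₂ : F) :
    #{v | φ v = c₁ ∧ ψ v = c₂} * Fintype.card F ^ 2 = Fintype.card V := by
  have := (φ.prod ψ).toAddMonoidHom.card_filter_eq_mul_card
    (surjective_prod_of_forall_ne_smul hψ h) (c₁, c₂)
  simpa [Prod.ext_iff, sq] using this

end LinearForms

section ProductCounts

variable {F V : Type*} [Field F] [Fintype F] [DecidableEq F] [AddCommGroup V] [Module F V]
  [Fintype V]

lemma card_filter_eq_card_of_eq_add {f : F × V → F} {g : F → F} {φ : V →ₗ[F] F}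
    (hf : ∀ w, f w = g w.1 + φ w.2) (hφ : φ ≠ 0) (c : F) :
    #{w | f w = c} = Fintype.card V := by
  have hx (x : F) : #{v | g x + φ v = c} * Fintype.card F = Fintype.card V := by
    simpa only [← eq_sub_iff_add_eq'] using card_filter_eq_of_ne_zero hφ (c - g x)
  have h : #{w : F × V | g w.1 + φ w.2 = c} * Fintype.card F =
      Fintype.card V * Fintype.card F := by
    rw [card_filter_prod_eq_sum (fun x v => g x + φ v = c), sum_mul,
      sum_congr rfl fun x _ => hx x, sum_const, card_univ, smul_eq_mul, mul_comm]
  simpa only [hf] using Nat.eq_of_mul_eq_mul_right Fintype.card_pos h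

lemma pairCount_mul_card_of_forall_ne_smul {f f' : F × V → F} {g g' : F → F}
    {φ ψ : V →ₗ[F] F} (hf : ∀ w, f w = g w.1 + φ w.2) (hf' : ∀ w, f' w = g' w.1 + ψ w.2)
    (hψ : ψ ≠ 0) (h : ∀ c : F, φ ≠ c • ψ) (c₁ c₂ : F) :
    pairCount f f' c₁ c₂ * Fintype.card F = Fintype.card V := by
  have hx (x : F) :
      #{v | g x + φ v = c₁ ∧ g' x + ψ v = c₂} * Fintype.card F ^ 2 = Fintype.card V := by
    simpa only [← eq_sub_iff_add_eq'] using
      card_filter_and_eq_of_forall_ne_smul hψ h (c₁ - g x) (c₂ - g' x)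
  have h : #{w : F × V | g w.1 + φ w.2 = c₁ ∧ g' w.1 + ψ w.2 = c₂} * Fintype.card F *
      Fintype.card F = Fintype.card V * Fintype.card F := by
    rw [card_filter_prod_eq_sum (fun x v => g x + φ v = c₁ ∧ g' x + ψ v = c₂), sum_mul,
      sum_mul]
    simp_rw [mul_assoc, ← sq, hx]
    rw [sum_const, card_univ, smul_eq_mul, mul_comm]
  simpa only [pairCount, hf, hf'] using Nat.eq_of_mul_eq_mul_right Fintype.card_pos h

lemma pairCount_mul_card_of_eq_smul {f f' : F × V → F} {g g' : F → F} {ψ : V →ₗ[F] F} {c : F}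
    (hf : ∀ w, f w = g w.1 + c * ψ w.2) (hf' : ∀ w, f' w = g' w.1 + ψ w.2) (hψ : ψ ≠ 0)
    (c₁ c₂ : F) :
    pairCount f f' c₁ c₂ * Fintype.card F =
      Fintype.card V * #{x | g x - c * g' x = c₁ - c * c₂} := by
  simp only [pairCount, hf, hf']
  rw [card_filter_prod_eq_sum (fun x v => g x + c * ψ v = c₁ ∧ g' x + ψ v = c₂), sum_mul,
    card_filter, mul_sum]
  refine sum_congr rfl fun x _ => ?_
  rw [mul_ite, mul_one, mul_zero]
  split_ifs with hx
  · rw [← card_filter_eq_of_ne_zero hψ (c₂ - g' x)]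
    congr 2
    ext v
    simp only [mem_filter, mem_univ, true_and]
    constructor
    · rintro ⟨-, h₂⟩
      linear_combination h₂
    · intro hv
      exact ⟨by linear_combination c * hv + hx, by linear_combination hv⟩
  · rw [Finset.card_eq_zero.2, zero_mul]
    refine filter_eq_empty_iff.2 fun v _ ⟨h₁, h₂⟩ => hx ?_
    linear_combination h₁ - c * h₂

end ProductCounts

section QuadraticEquation

variable {F : Type*} [Field F] [Fintype F] [DecidableEq F]

def numRoots (b e : F) : ℕ := #{x | x * x + b * x = e}

lemma numRoots_le_two (b e : F) : numRoots b e ≤ 2 := by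
  rcases Finset.eq_empty_or_nonempty (univ.filter fun x : F => x * x + b * x = e) with h | ⟨x₀, hx₀⟩
  · simp [numRoots, h]
  have hsub : (univ.filter fun x : F => x * x + b * x = e) ⊆ {x₀, -b - x₀} := by
    intro x hx
    simp only [mem_filter, mem_univ, true_and] at hx hx₀
    have : (x - x₀) * (x + x₀ + b) = 0 := by linear_combination hx - hx₀
    rcases mul_eq_zero.1 this with h | h
    · simp [sub_eq_zero.1 h]
    · simp [show x = -b - x₀ by linear_combination h]
  exact (card_le_card hsub).trans card_le_two

lemma numRoots_eq_one_iff (b e : F) :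
    numRoots b e = 1 ↔ ∃ x, (-(x + x), -(x * x)) = (b, e) := by
  constructor
  · intro h
    obtain ⟨x, hx⟩ := card_eq_one.1 h
    have hroot : x * x + b * x = e := by
      simpa using (Finset.ext_iff.1 hx x).2 (mem_singleton_self x)
    have hother : -b - x = x := by
      rw [← mem_singleton, ← hx]
      simp only [mem_filter, mem_univ, true_and]
      linear_combination hroot
    refine ⟨x, Prod.ext (by linear_combination hother) (by linear_combination hroot + x * hother)⟩
  · rintro ⟨x, hx⟩
    obtain ⟨rfl, rfl⟩ := Prod.ext_iff.1 hx
    refine card_eq_one.2 ⟨x, Finset.ext fun y => ?_⟩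
    simp only [mem_filter, mem_univ, true_and, mem_singleton]
    constructor
    · intro hy
      have : (y - x) * (y - x) = 0 := by linear_combination hy
      exact sub_eq_zero.1 (mul_self_eq_zero.1 this)
    · rintro rfl
      ring

/-- `x² + b x = e` has a single root `x` exactly when `(b, e) = (-2x, -x²)`. -/
lemma card_filter_numRoots_eq_one :
    #{p : F × F | numRoots p.1 p.2 = 1} = Fintype.card F := by
  have hinj : Injective fun x : F => (-(x + x), -(x * x)) := by
    intro x y hxy
    simp only [Prod.mk.injEq] at hxy
    have : (y - x) * (y - x) = 0 := by linear_combination y * hxy.1 - hxy.2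
    exact (sub_eq_zero.1 (mul_self_eq_zero.1 this)).symm
  rw [← card_univ, ← card_image_of_injective univ hinj]
  congr 1
  ext p
  simp [numRoots_eq_one_iff]

lemma card_filter_numRoots_ne_one :
    #{p : F × F | numRoots p.1 p.2 ≠ 1} = Fintype.card F * (Fintype.card F - 1) := by
  have := Finset.card_filter_add_card_filter_not (s := univ)
    (p := fun p : F × F => numRoots p.1 p.2 = 1)
  rw [card_filter_numRoots_eq_one, card_univ, Fintype.card_prod] at this
  simp only [ne_eq, Nat.mul_sub_one]
  omega

end QuadraticEquation

lemma Projectivization.rep_ne_smul_rep {F W : Type*} [Field F] [AddCommGroup W] [Module F W]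
    {P P' : ℙ F W} (h : P ≠ P') (c : F) : P.rep ≠ c • P'.rep := fun hc =>
  h <| by rw [← P.mk_rep, ← P'.mk_rep, Projectivization.mk_eq_mk_iff']; exact ⟨c, hc.symm⟩

lemma IsPrimePow.exists_field_card {s : ℕ} (hs : IsPrimePow s) :
    ∃ (F : Type) (_ : Field F) (_ : Fintype F), Fintype.card F = s := by
  obtain ⟨p, n, hp, hn, rfl⟩ := hs
  have := Fact.mk hp.nat_prime
  exact ⟨GaloisField p n, inferInstance, Fintype.ofFinite _,
    by rw [Fintype.card_eq_nat_card, GaloisField.card p n hn.ne']⟩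

lemma Projectivization.card_dual (F W : Type*) [Field F] [Fintype F] [AddCommGroup W]
    [Module F W] [Fintype W] [Fintype (ℙ F (Module.Dual F W))] :
    Fintype.card (ℙ F (Module.Dual F W)) = (Fintype.card W - 1) / (Fintype.card F - 1) := by
  simp only [← Nat.card_eq_fintype_card]
  rw [Projectivization.card'', Nat.card_congr (Module.finBasis F W).toDualEquiv.toEquiv]

section Columns

variable {F V : Type*} [Field F] [AddCommGroup V] [Module F V]

lemma LinearMap.apply_eq_fst_add_snd (φ : F × V →ₗ[F] F) (w : F × V) :
    φ w = φ (1, 0) * w.1 + φ.comp (LinearMap.inr F F V) w.2 := by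
  have hw : w = w.1 • ((1 : F), (0 : V)) + (0, w.2) := by ext <;> simp
  calc φ w = φ (w.1 • ((1 : F), (0 : V)) + (0, w.2)) := congrArg φ hw
    _ = _ := by rw [map_add, map_smul, smul_eq_mul, mul_comm]; rfl

def quadCol (γ : F) (μ : V →ₗ[F] F) (w : F × V) : F := w.1 * w.1 + γ * w.1 + μ w.2

noncomputable def extendPoint (P : ℙ F (Module.Dual F V)) (t : F) :
    ℙ F (Module.Dual F (F × V)) :=
  Projectivization.mk F (t • LinearMap.fst F F V + P.rep.comp (LinearMap.snd F F V)) fun h =>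
    P.rep_nonzero <| LinearMap.ext fun v => by simpa using LinearMap.congr_fun h (0, v)

lemma extendPoint_injective (P : ℙ F (Module.Dual F V)) : Injective (extendPoint P) := by
  intro t t' h
  obtain ⟨a, ha⟩ := (Projectivization.mk_eq_mk_iff' F _ _ _ _).1 h
  obtain ⟨v, hv⟩ := DFunLike.ne_iff.1 P.rep_nonzero
  have ha1 : a = 1 := by
    have := LinearMap.congr_fun ha (0, v)
    simp only [LinearMap.smul_apply, LinearMap.add_apply, LinearMap.fst_apply, mul_zero,
      LinearMap.comp_apply, LinearMap.snd_apply, zero_add, smul_eq_mul] at this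
    exact (mul_eq_right₀ hv).1 this
  simpa [ha1] using (LinearMap.congr_fun ha (1, 0)).symm

variable [Fintype F] [DecidableEq F] [Fintype V]

lemma card_filter_quadCol_eq {μ : V →ₗ[F] F} (hμ : μ ≠ 0) (γ c : F) :
    #{w | quadCol γ μ w = c} = Fintype.card V :=
  card_filter_eq_card_of_eq_add (g := fun x => x * x + γ * x) (fun _ => rfl) hμ c

lemma pairCount_quadCol_mul_card {γ γ' : F} {P P' : ℙ F (Module.Dual F V)}
    (h : (γ, P) ≠ (γ', P')) (c₁ c₂ : F) :
    pairCount (quadCol γ P.rep) (quadCol γ' P'.rep) c₁ c₂ * Fintype.card F = Fintype.card V := by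
  by_cases hP : P = P'
  · subst hP
    have hγ : γ - γ' ≠ 0 := sub_ne_zero.2 fun hγ => h (by rw [hγ])
    rw [pairCount_mul_card_of_eq_smul (f := quadCol γ P.rep) (f' := quadCol γ' P.rep)
      (g := fun x => x * x + γ * x) (g' := fun x => x * x + γ' * x) (c := 1)
      (fun w => by simp [quadCol]) (fun _ => rfl) P.rep_nonzero,
      mul_eq_left₀ Fintype.card_ne_zero]
    refine card_eq_one.2 ⟨(c₁ - c₂) / (γ - γ'), Finset.ext fun x => ?_⟩
    simp only [mem_filter, mem_univ, true_and, mem_singleton, one_mul]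
    rw [eq_div_iff hγ]
    constructor <;> intro hx <;> linear_combination hx
  · exact pairCount_mul_card_of_forall_ne_smul (f := quadCol γ P.rep) (f' := quadCol γ' P'.rep)
      (g := fun x => x * x + γ * x)
      (g' := fun x => x * x + γ' * x) (fun _ => rfl) (fun _ => rfl) P'.rep_nonzero
      (Projectivization.rep_ne_smul_rep hP) c₁ c₂

lemma pairCount_rep_quadCol_mul_card_or_eq_extendPoint (γ : F) (P : ℙ F (Module.Dual F V))
    (Q : ℙ F (Module.Dual F (F × V))) :
    (∀ c₁ c₂, pairCount Q.rep (quadCol γ P.rep) c₁ c₂ * Fintype.card F = Fintype.card V) ∨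
      ∃ t, Q = extendPoint P t := by
  have hquad (w : F × V) : quadCol γ P.rep w = (w.1 * w.1 + γ * w.1) + P.rep w.2 := rfl
  by_cases hind : ∀ c : F, Q.rep.comp (LinearMap.inr F F V) ≠ c • P.rep
  · exact Or.inl (pairCount_mul_card_of_forall_ne_smul (g := fun x => Q.rep (1, 0) * x)
      (g' := fun x => x * x + γ * x) Q.rep.apply_eq_fst_add_snd hquad P.rep_nonzero hind)
  push Not at hind
  obtain ⟨c, hc⟩ := hind
  have hrep (w : F × V) : Q.rep w = Q.rep (1, 0) * w.1 + c * P.rep w.2 := by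
    rw [Q.rep.apply_eq_fst_add_snd, hc, LinearMap.smul_apply, smul_eq_mul]
  by_cases hc0 : c = 0
  · left
    intro c₁ c₂
    have ha : Q.rep (1, 0) ≠ 0 := fun ha => Q.rep_nonzero <| LinearMap.ext fun w => by
      rw [hrep, ha, hc0]
      simp
    rw [pairCount_mul_card_of_eq_smul (g := fun x => Q.rep (1, 0) * x)
      (g' := fun x => x * x + γ * x) hrep hquad P.rep_nonzero,
      mul_eq_left₀ Fintype.card_ne_zero]
    refine card_eq_one.2 ⟨c₁ / Q.rep (1, 0), Finset.ext fun x => ?_⟩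
    simp only [mem_filter, mem_univ, true_and, mem_singleton, hc0, zero_mul, sub_zero,
      eq_div_iff ha]
    rw [mul_comm]
  · right
    refine ⟨Q.rep (1, 0) / c, ?_⟩
    refine Q.mk_rep.symm.trans ((Projectivization.mk_eq_mk_iff' F _ _ _ _).2
      ⟨c, LinearMap.ext fun w => ?_⟩)
    rw [hrep w]
    simp only [LinearMap.smul_apply, LinearMap.add_apply, LinearMap.fst_apply,
      LinearMap.comp_apply, LinearMap.snd_apply, smul_eq_mul]
    field_simp

lemma exists_pairCount_extendPoint_quadCol (γ t : F) (P : ℙ F (Module.Dual F V)) :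
    ∃ u : F, u ≠ 0 ∧ ∀ c₁ c₂, pairCount (extendPoint P t).rep (quadCol γ P.rep) c₁ c₂ *
      Fintype.card F = Fintype.card V * numRoots (γ - t) (c₂ - u⁻¹ * c₁) := by
  obtain ⟨u, hu⟩ := (Projectivization.mk_eq_mk_iff' F _ _ _ _).1 (extendPoint P t).mk_rep
  have hu0 : u ≠ 0 := by
    rintro rfl
    exact (extendPoint P t).rep_nonzero (by rw [← hu, zero_smul])
  refine ⟨u, hu0, fun c₁ c₂ => ?_⟩
  have hrep (w : F × V) : (extendPoint P t).rep w = u * t * w.1 + u * P.rep w.2 := by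
    rw [← hu]
    simp only [LinearMap.smul_apply, LinearMap.add_apply, LinearMap.fst_apply,
      LinearMap.comp_apply, LinearMap.snd_apply, smul_eq_mul]
    ring
  rw [pairCount_mul_card_of_eq_smul (f' := quadCol γ P.rep) (g := fun x => u * t * x)
    (g' := fun x => x * x + γ * x) hrep (fun _ => rfl) P.rep_nonzero, numRoots]
  congr 2
  ext x
  simp only [mem_filter, mem_univ, true_and]
  constructor <;> intro hx
  · field_simp
    linear_combination -hx
  · field_simp at hx
    linear_combination -hx

lemma exists_pairCount_rep_quadCol_le_two (γ : F) (P : ℙ F (Module.Dual F V))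
    (Q : ℙ F (Module.Dual F (F × V))) (c₁ c₂ : F) :
    ∃ r ≤ 2, pairCount Q.rep (quadCol γ P.rep) c₁ c₂ * Fintype.card F = Fintype.card V * r := by
  rcases pairCount_rep_quadCol_mul_card_or_eq_extendPoint γ P Q with h | ⟨t, rfl⟩
  · exact ⟨1, one_le_two, by rw [h, mul_one]⟩
  · obtain ⟨u, -, hu⟩ := exists_pairCount_extendPoint_quadCol γ t P
    exact ⟨_, numRoots_le_two _ _, hu c₁ c₂⟩

/-- Only the points `extendPoint P t`, one for each `t : F`, give unbalanced cells against
`quadCol γ P.rep`, and for each of them the unbalanced cells are those where a quadratic equation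
does not have exactly one root. -/
lemma sum_card_pairCount_rep_quadCol_ne [Fintype (ℙ F (Module.Dual F (F × V)))] (γ : F)
    (P : ℙ F (Module.Dual F V)) :
    ∑ Q : ℙ F (Module.Dual F (F × V)),
        #{c : F × F | pairCount Q.rep (quadCol γ P.rep) c.1 c.2 * Fintype.card F ≠
          Fintype.card V} =
      Fintype.card F * (Fintype.card F * (Fintype.card F - 1)) := by
  classical
  rw [← sum_subset (subset_univ (univ.image (extendPoint P))) fun Q _ hQ => ?_,
    sum_image fun t _ t' _ h => extendPoint_injective P h]
  · have hcells (t : F) :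
        #{c : F × F | pairCount (extendPoint P t).rep (quadCol γ P.rep) c.1 c.2 *
          Fintype.card F ≠ Fintype.card V} =
        Fintype.card F * #{e | numRoots (γ - t) e ≠ 1} := by
      obtain ⟨u, -, hu⟩ := exists_pairCount_extendPoint_quadCol γ t P
      simp_rw [hu, Ne, mul_eq_left₀ Fintype.card_ne_zero]
      exact card_filter_snd_sub_mul_fst (fun e => ¬numRoots (γ - t) e = 1) u⁻¹
    simp_rw [hcells, ← mul_sum, ← card_filter_numRoots_ne_one,
      card_filter_prod_eq_sum (fun b e => numRoots b e ≠ 1)]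
    congr 1
    exact Fintype.sum_equiv (Equiv.subLeft γ) _ _ fun t => rfl
  · rcases pairCount_rep_quadCol_mul_card_or_eq_extendPoint γ P Q with h | ⟨t, rfl⟩
    · simp [h]
    · exact absurd (mem_image_of_mem _ (mem_univ t)) hQ

end Columns

lemma mul_sq_eq_card_prod_iff {F V : Type*} [Fintype F] [Nonempty F] [Fintype V] (n r : ℕ) :
    n * Fintype.card F ^ 2 = Fintype.card (F × V) * r ↔
      n * Fintype.card F = Fintype.card V * r := by
  rw [Fintype.card_prod, show n * Fintype.card F ^ 2 = n * Fintype.card F * Fintype.card F by ring,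
    show Fintype.card F * Fintype.card V * r = Fintype.card V * r * Fintype.card F by ring,
    mul_left_inj' Fintype.card_ne_zero]

section AddelmanKempthorne

variable {F V : Type*} [Field F] [AddCommGroup V] [Module F V] {m κ : ℕ}

/-- The columns of the Addelman–Kempthorne construction. -/
noncomputable def akColumns (L : Fin m → ℙ F (Module.Dual F (F × V)))
    (D : Fin κ → F × ℙ F (Module.Dual F V)) : Fin (m + κ) → F × V → F :=
  Fin.addCases (fun a w => (L a).rep w) fun b => quadCol (D b).1 (D b).2.rep

variable (L : Fin m → ℙ F (Module.Dual F (F × V))) (D : Fin κ → F × ℙ F (Module.Dual F V))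

@[simp]
lemma akColumns_castAdd (a : Fin m) : akColumns L D (Fin.castAdd κ a) = (L a).rep :=
  Fin.addCases_left a

@[simp]
lemma akColumns_natAdd (b : Fin κ) :
    akColumns L D (Fin.natAdd m b) = quadCol (D b).1 (D b).2.rep :=
  Fin.addCases_right b

variable [Fintype F] [DecidableEq F] [Fintype V]

lemma card_filter_akColumns_mul_card (j : Fin (m + κ)) (c : F) :
    #{w | akColumns L D j w = c} * Fintype.card F = Fintype.card (F × V) := by
  induction j using Fin.addCases with
  | left a => simpa using card_filter_eq_of_ne_zero (L a).rep_nonzero c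
  | right b =>
    rw [akColumns_natAdd, card_filter_quadCol_eq (D b).2.rep_nonzero, Fintype.card_prod, mul_comm]

variable {L D}

lemma pairCount_akColumns_castAdd (hL : Injective L) {a a' : Fin m} (h : a ≠ a') (c₁ c₂ : F) :
    pairCount (akColumns L D (Fin.castAdd κ a)) (akColumns L D (Fin.castAdd κ a')) c₁ c₂ *
      Fintype.card F ^ 2 = Fintype.card (F × V) := by
  simpa [pairCount] using card_filter_and_eq_of_forall_ne_smul (L a').rep_nonzero
    (Projectivization.rep_ne_smul_rep (hL.ne h)) c₁ c₂

lemma pairCount_akColumns_natAdd (hD : Injective D) {b b' : Fin κ} (h : b ≠ b') (c₁ c₂ : F) :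
    pairCount (akColumns L D (Fin.natAdd m b)) (akColumns L D (Fin.natAdd m b')) c₁ c₂ *
      Fintype.card F ^ 2 = Fintype.card (F × V) := by
  rw [← mul_one (Fintype.card (F × V)), mul_sq_eq_card_prod_iff, mul_one, akColumns_natAdd,
    akColumns_natAdd]
  exact pairCount_quadCol_mul_card (hD.ne h) c₁ c₂

lemma exists_pairCount_akColumns_le_two (hL : Injective L) (hD : Injective D)
    {j j' : Fin (m + κ)} (h : j ≠ j') (c₁ c₂ : F) :
    ∃ r ≤ 2, pairCount (akColumns L D j) (akColumns L D j') c₁ c₂ * Fintype.card F ^ 2 =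
      Fintype.card (F × V) * r := by
  induction j using Fin.addCases with
  | left a =>
    induction j' using Fin.addCases with
    | left a' =>
      exact ⟨1, one_le_two, by
        rw [mul_one]; exact pairCount_akColumns_castAdd hL (fun h' => h (congrArg _ h')) c₁ c₂⟩
    | right b =>
      simp_rw [mul_sq_eq_card_prod_iff, akColumns_castAdd, akColumns_natAdd]
      exact exists_pairCount_rep_quadCol_le_two _ _ _ c₁ c₂
  | right b =>
    induction j' using Fin.addCases with
    | left a =>
      simp_rw [pairCount_comm _ _ c₁, mul_sq_eq_card_prod_iff, akColumns_castAdd,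
        akColumns_natAdd]
      exact exists_pairCount_rep_quadCol_le_two _ _ _ c₂ c₁
    | right b' =>
      exact ⟨1, one_le_two, by
        rw [mul_one]; exact pairCount_akColumns_natAdd hD (fun h' => h (congrArg _ h')) c₁ c₂⟩

lemma sum_card_pairCount_akColumns_ne [Fintype (ℙ F (Module.Dual F (F × V)))]
    (hL : Bijective L) (hD : Injective D) :
    ∑ j ∈ univ.filter (StrictMono : (Fin 2 → Fin (m + κ)) → Prop),
        #{c : F × F | pairCount (akColumns L D (j 0)) (akColumns L D (j 1)) c.1 c.2 *
          Fintype.card F ^ 2 ≠ Fintype.card (F × V)} =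
      κ * (Fintype.card F * (Fintype.card F * (Fintype.card F - 1))) := by
  rw [sum_strictMono_fin_add (fun i i' => #{c : F × F | pairCount (akColumns L D i)
    (akColumns L D i') c.1 c.2 * Fintype.card F ^ 2 ≠ Fintype.card (F × V)})
    (fun a a' h => ?_) (fun b b' h => ?_)]
  · have hbal (n : ℕ) :
        n * Fintype.card F ^ 2 ≠ Fintype.card (F × V) ↔ n * Fintype.card F ≠ Fintype.card V := by
      simpa using (mul_sq_eq_card_prod_iff (F := F) (V := V) n 1).not
    rw [sum_comm]
    simp_rw [hbal, akColumns_castAdd, akColumns_natAdd]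
    have hcolumn (b : Fin κ) :
        ∑ a, #{c : F × F | pairCount (L a).rep (quadCol (D b).1 (D b).2.rep) c.1 c.2 *
          Fintype.card F ≠ Fintype.card V} =
        Fintype.card F * (Fintype.card F * (Fintype.card F - 1)) :=
      (hL.sum_comp fun Q => #{c : F × F | pairCount Q.rep (quadCol (D b).1 (D b).2.rep)
        c.1 c.2 * Fintype.card F ≠ Fintype.card V}).trans (sum_card_pairCount_rep_quadCol_ne _ _)
    simp only [hcolumn, sum_const, card_univ, Fintype.card_fin, smul_eq_mul]
  · exact card_eq_zero.2 <| filter_eq_empty_iff.2 fun c _ hc =>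
      hc (pairCount_akColumns_castAdd hL.1 h.ne c.1 c.2)
  · exact card_eq_zero.2 <| filter_eq_empty_iff.2 fun c _ hc =>
      hc (pairCount_akColumns_natAdd hD h.ne c.1 c.2)

end AddelmanKempthorne

section AddelmanKempthorneArray

variable {F V : Type*} [Field F] [Fintype F] [DecidableEq F] [AddCommGroup V] [Module F V]
  [Fintype V] {m κ s N : ℕ} {L : Fin m → ℙ F (Module.Dual F (F × V))}
  {D : Fin κ → F × ℙ F (Module.Dual F V)} (e : Fin N ≃ F × V) (σ : F ≃ Fin s)

lemma isOA_one_columnArray_akColumns : IsOA s 1 (columnArray e σ (akColumns L D)) := by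
  obtain rfl : Fintype.card F = s := by simpa using Fintype.card_congr σ
  exact isOA_one_columnArray e σ _ Fintype.card_pos (card_filter_akColumns_mul_card L D)

lemma isOA_two_columnArray_akColumns_castAdd (hL : Injective L) :
    IsOA s 2 (columnArray e σ fun a => akColumns L D (Fin.castAdd κ a)) := by
  obtain rfl : Fintype.card F = s := by simpa using Fintype.card_congr σ
  exact isOA_two_columnArray e σ _ Fintype.card_pos fun a a' h =>
    pairCount_akColumns_castAdd hL h.ne

lemma isOA_two_columnArray_akColumns_natAdd (hD : Injective D) :
    IsOA s 2 (columnArray e σ fun b => akColumns L D (Fin.natAdd m b)) := by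
  obtain rfl : Fintype.card F = s := by simpa using Fintype.card_congr σ
  exact isOA_two_columnArray e σ _ Fintype.card_pos fun b b' h =>
    pairCount_akColumns_natAdd hD h.ne

lemma exists_rowCount_columnArray_akColumns_le_two (hL : Injective L) (hD : Injective D)
    (x : Fin 2 → Fin s) {j : Fin 2 → Fin (m + κ)} (hj : StrictMono j) :
    ∃ r ≤ 2, rowCount (columnArray e σ (akColumns L D)) x j * s ^ 2 = N * r := by
  obtain rfl : Fintype.card F = s := by simpa using Fintype.card_congr σ
  obtain rfl : Fintype.card (F × V) = N := by simpa using Fintype.card_congr e.symm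
  rw [rowCount_columnArray_two]
  exact exists_pairCount_akColumns_le_two hL hD (hj.injective.ne zero_ne_one) _ _

lemma sum_card_rowCount_columnArray_akColumns_ne [Fintype (ℙ F (Module.Dual F (F × V)))]
    (hL : Bijective L) (hD : Injective D) :
    ∑ j ∈ univ.filter (StrictMono : (Fin 2 → Fin (m + κ)) → Prop),
        #{x | rowCount (columnArray e σ (akColumns L D)) x j * s ^ 2 ≠ N} =
      κ * (s * (s * (s - 1))) := by
  obtain rfl : Fintype.card F = s := by simpa using Fintype.card_congr σ
  obtain rfl : Fintype.card (F × V) = N := by simpa using Fintype.card_congr e.symm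
  rw [← sum_card_pairCount_akColumns_ne hL hD]
  exact sum_congr rfl fun j _ => card_filter_rowCount_columnArray_two e σ _
    (fun n => n * Fintype.card F ^ 2 ≠ Fintype.card (F × V)) j

end AddelmanKempthorneArray

lemma natCast_pow_div_sq {s l : ℕ} (hs : 0 < s) (hl : 2 ≤ l) :
    ((s ^ l : ℕ) : ℝ) / (s : ℝ) ^ 2 = (s : ℝ) ^ (l - 2) := by
  rw [div_eq_iff (by positivity), ← pow_add, Nat.sub_add_cancel hl, Nat.cast_pow]

/-- Addelman–Kempthorne half-construction: for a prime power `s`, `ℓ ≥ 2` and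
`1 ≤ κ̃ ≤ s(s^{ℓ−1}−1)/(s−1)`, there is an array with `s^ℓ` runs,
`(s^ℓ−1)/(s−1)+κ̃` factors and `s` levels which is an OA of strength one, whose first
`(s^ℓ−1)/(s−1)` columns and whose last `κ̃` columns form OAs of strength two, with
`Tol₂ = s^{ℓ−2}` and `Unb_{p,2} = κ̃s²(s−1)s^{(ℓ−2)p}`. -/
theorem statement18 {s l κ : ℕ} (hs : IsPrimePow s) (hl : 2 ≤ l) (hκ : 0 < κ)
    (hκ' : κ ≤ s * ((s ^ (l - 1) - 1) / (s - 1))) :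
    ∃ A : Fin (s ^ l) → Fin ((s ^ l - 1) / (s - 1) + κ) → Fin s,
      IsOA s 1 A ∧
      IsOA s 2 (fun i (j : Fin ((s ^ l - 1) / (s - 1))) => A i (Fin.castAdd κ j)) ∧
      IsOA s 2 (fun i (j : Fin κ) => A i (Fin.natAdd ((s ^ l - 1) / (s - 1)) j)) ∧
      Tol s 2 A = (s : ℝ) ^ (l - 2) ∧
      ∀ p : ℝ, 1 ≤ p →
        Unb s p 2 A =
          (κ : ℝ) * (s : ℝ) ^ 2 * ((s : ℝ) - 1) * (s : ℝ) ^ (((l : ℝ) - 2) * p) := by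
  classical
  obtain ⟨F, _, _, hF⟩ := hs.exists_field_card
  have hs1 : 1 < s := hF ▸ Fintype.one_lt_card
  let V := Fin (l - 1) → F
  have hV : Fintype.card V = s ^ (l - 1) := by simp [V, hF]
  have hW : Fintype.card (F × V) = s ^ l := by
    rw [Fintype.card_prod, hV, hF, ← pow_succ', Nat.sub_add_cancel (by omega)]
  have : Finite (Module.Dual F (F × V)) := Module.finite_of_finite F
  have : Finite (Module.Dual F V) := Module.finite_of_finite F
  let _ := Fintype.ofFinite (ℙ F (Module.Dual F (F × V)))
  let _ := Fintype.ofFinite (ℙ F (Module.Dual F V))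
  have L : Fin ((s ^ l - 1) / (s - 1)) ≃ ℙ F (Module.Dual F (F × V)) :=
    Fintype.equivOfCardEq <| by rw [Fintype.card_fin, Projectivization.card_dual, hW, hF]
  obtain ⟨D⟩ : Nonempty (Fin κ ↪ F × ℙ F (Module.Dual F V)) :=
    Function.Embedding.nonempty_of_card_le <| by
      rwa [Fintype.card_fin, Fintype.card_prod, Projectivization.card_dual, hV, hF]
  let e := (Fintype.equivFinOfCardEq hW).symm
  let σ := Fintype.equivFinOfCardEq hF
  have hcells := exists_rowCount_columnArray_akColumns_le_two e σ L.injective D.injective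
  have hunbal := sum_card_rowCount_columnArray_akColumns_ne e σ L.bijective D.injective
  have hunbal_ne : κ * (s * (s * (s - 1))) ≠ 0 := by
    have := Nat.sub_pos_of_lt hs1
    positivity
  refine ⟨columnArray e σ (akColumns L D), isOA_one_columnArray_akColumns e σ,
    isOA_two_columnArray_akColumns_castAdd e σ L.injective,
    isOA_two_columnArray_akColumns_natAdd e σ D.injective,
    by rw [Tol_eq_of_cells_le_twice (by omega) _ (fun x _ => hcells x) (hunbal ▸ hunbal_ne),
      natCast_pow_div_sq (by omega) hl], fun p hp => ?_⟩
  rw [Unb_eq_of_cells_le_twice (by omega) _ (by positivity) (fun x _ => hcells x), hunbal,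
    natCast_pow_div_sq (by omega) hl, ← Real.rpow_natCast, ← Real.rpow_mul (by positivity),
    Nat.cast_sub hl]
  push_cast [Nat.cast_sub hs1.le]
  ring
end
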